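/- arXiv:2409.05980 — 12 statements merged into one kernel-verified Lean document; each statement's English description precedes it below -/
import Mathlib

section
/- For a k-armed Rising Graph-Triggered Bandit with block-diagonal connectivity given by a clique partition 𝒞, the optimal cumulative reward over horizon T equals the best clique's greedy value: the maximum over all action sequences I : {1,…,T} → {1,…,k} of ∑_{t=1}^T μ_{I_t}(Ñ_{I_t,t}) is equal to max_{C ∈ 𝒞} ∑_{t=1}^T max_{j ∈ C} μ_j(t). -/
/-- For a `k`-armed Rising Graph-Triggered Bandit with block-diagonal
connectivity given by a clique partition (encoded by a surjective clique-assignment map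
`cl : Fin k → Fin m`), the optimal cumulative reward over horizon `T` equals the best
clique's greedy value. Rounds are indexed by `Fin T`; the trigger count of the pulled arm
at round `t` is the number of rounds `s ≤ t` whose pulled arm lies in the same clique. -/
theorem stmt_0
    (k m T : ℕ) (hk : 0 < k) (hT : 0 < T)
    (μ : Fin k → ℕ → ℝ)
    (hrise : ∀ (i : Fin k) (n : ℕ), 1 ≤ n → 0 ≤ μ i (n + 1) - μ i n)
    (hconc : ∀ (i : Fin k) (n : ℕ), 1 ≤ n →
      μ i (n + 2) - μ i (n + 1) ≤ μ i (n + 1) - μ i n)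
    (cl : Fin k → Fin m) (hcl : Function.Surjective cl) :
    IsGreatest
      (Set.range fun I : Fin T → Fin k =>
        ∑ t : Fin T,
          μ (I t) ((Finset.univ.filter fun s : Fin T => s ≤ t ∧ cl (I s) = cl (I t)).card))
      (⨆ c : Fin m, ∑ t ∈ Finset.Icc 1 T, ⨆ j : {j : Fin k // cl j = c}, μ j.1 t) := by
  classical
  haveI : Nonempty (Fin m) := ⟨cl ⟨0, hk⟩⟩
  haveI hne : ∀ c : Fin m, Nonempty {j : Fin k // cl j = c} := by
    intro c; obtain ⟨j, hj⟩ := hcl c; exact ⟨⟨j, hj⟩⟩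
  -- monotonicity of each μ i on [1, ∞)
  have μmono : ∀ (i : Fin k) (a b : ℕ), 1 ≤ a → a ≤ b → μ i a ≤ μ i b := by
    intro i a b ha hab
    induction b with
    | zero => exact absurd (ha.trans hab) (by omega)
    | succ b ih =>
      rcases Nat.lt_or_ge a (b + 1) with h | h
      · have hb : 1 ≤ b := by omega
        have h1 := ih (by omega)
        have h2 := hrise i b hb
        linarith
      · have : a = b + 1 := by omega
        rw [this]
  -- the per-clique greedy value function
  set M : Fin m → ℕ → ℝ := fun c n => ⨆ j : {j : Fin k // cl j = c}, μ j.1 n with hM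
  have Mattain : ∀ (c : Fin m) (n : ℕ), ∃ j : {j : Fin k // cl j = c}, M c n = μ j.1 n := by
    intro c n
    obtain ⟨j, hj⟩ := exists_eq_ciSup_of_finite (f := fun j : {j : Fin k // cl j = c} => μ j.1 n)
    exact ⟨j, hj.symm⟩
  have Mle : ∀ (c : Fin m) (n : ℕ) (j : Fin k), cl j = c → μ j n ≤ M c n := by
    intro c n j hj
    exact le_ciSup (f := fun j : {j : Fin k // cl j = c} => μ j.1 n)
      (Set.Finite.bddAbove (Set.finite_range _)) ⟨j, hj⟩
  have Mmono : ∀ (c : Fin m) (a b : ℕ), 1 ≤ a → a ≤ b → M c a ≤ M c b := by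
    intro c a b ha hab
    obtain ⟨j, hj⟩ := Mattain c a
    rw [hj]
    exact (μmono j.1 a b ha hab).trans (Mle c b j.1 j.2)
  set S : Fin m → ℕ → ℝ := fun c n => ∑ r ∈ Finset.Icc 1 n, M c r with hS
  set V : ℝ := ⨆ c : Fin m, S c T with hV
  constructor
  · -- membership: the greedy sequence on the best clique attains V
    obtain ⟨cstar, hcstar⟩ := exists_eq_ciSup_of_finite (f := fun c : Fin m => S c T)
    choose J hJ using fun t : Fin T => Mattain cstar (t.1 + 1)
    refine ⟨fun t => (J t).1, ?_⟩
    have hclJ : ∀ t : Fin T, cl (J t).1 = cstar := fun t => (J t).2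
    have hcard : ∀ t : Fin T,
        (Finset.univ.filter fun s : Fin T => s ≤ t ∧ cl (J s).1 = cl (J t).1).card = t.1 + 1 := by
      intro t
      have : (Finset.univ.filter fun s : Fin T => s ≤ t ∧ cl (J s).1 = cl (J t).1)
          = Finset.Iic t := by
        ext s
        simp [hclJ]
      rw [this, Fin.card_Iic]
    calc ∑ t : Fin T,
          μ (J t).1 ((Finset.univ.filter fun s : Fin T => s ≤ t ∧ cl (J s).1 = cl (J t).1).card)
        = ∑ t : Fin T, M cstar (t.1 + 1) := by
          refine Finset.sum_congr rfl fun t _ => ?_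
          rw [hcard t, ← hJ t]
      _ = ∑ r ∈ Finset.Icc 1 T, M cstar r := by
          rw [Fin.sum_univ_eq_sum_range (fun i => M cstar (i + 1)),
            ← Finset.Ico_add_one_right_eq_Icc, Finset.sum_Ico_eq_sum_range]
          simp [Nat.add_comm]
      _ = V := by rw [hV, ← hcstar]
  · -- upper bound
    rintro x ⟨I, rfl⟩
    set N : Fin T → ℕ := fun t =>
      (Finset.univ.filter fun s : Fin T => s ≤ t ∧ cl (I s) = cl (I t)).card with hN
    set Tc : Fin m → Finset (Fin T) := fun c =>
      Finset.univ.filter fun t => cl (I t) = c with hTc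
    -- step 1: bound each reward by the clique max
    have step1 : ∑ t : Fin T, μ (I t) (N t) ≤ ∑ t : Fin T, M (cl (I t)) (N t) :=
      Finset.sum_le_sum fun t _ => Mle _ _ _ rfl
    -- step 2: fiberwise decomposition
    have step2 : ∑ t : Fin T, M (cl (I t)) (N t)
        = ∑ c : Fin m, ∑ t ∈ Tc c, M c (N t) := by
      rw [← Finset.sum_fiberwise Finset.univ (fun t => cl (I t)) (fun t => M (cl (I t)) (N t))]
      refine Finset.sum_congr rfl fun c _ => Finset.sum_congr rfl fun t ht => ?_
      rw [Finset.mem_filter] at ht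
      rw [ht.2]
    -- step 3: within a clique, trigger counts are exactly 1, …, card
    have step3 : ∀ c : Fin m, ∑ t ∈ Tc c, M c (N t) = S c ((Tc c).card) := by
      intro c
      have hNt : ∀ t ∈ Tc c,
          N t = ((Tc c).filter fun s => s ≤ t).card := by
        intro t ht
        simp only [hTc, Finset.mem_filter, Finset.mem_univ, true_and] at ht
        have hset : (Finset.univ.filter fun s : Fin T => s ≤ t ∧ cl (I s) = cl (I t))
            = (Tc c).filter (fun s => s ≤ t) := by
          ext s
          simp only [Finset.mem_filter, Finset.mem_univ, true_and, hTc, ht]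
          tauto
        simp only [hN]
        rw [hset]
      have hmono : ∀ t ∈ Tc c, ∀ t' ∈ Tc c, t < t' → N t < N t' := by
        intro t ht t' ht' hlt
        rw [hNt t ht, hNt t' ht']
        refine Finset.card_lt_card ?_
        constructor
        · intro s hs
          rw [Finset.mem_filter] at hs ⊢
          exact ⟨hs.1, hs.2.trans hlt.le⟩
        · intro hsub
          have := hsub (Finset.mem_filter.mpr ⟨ht', le_refl t'⟩)
          rw [Finset.mem_filter] at this
          exact absurd this.2 (not_le.mpr hlt)
      have hinj : ∀ t ∈ Tc c, ∀ t' ∈ Tc c, N t = N t' → t = t' := by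
        intro t ht t' ht' h
        by_contra hne'
        rcases lt_or_gt_of_ne hne' with hlt | hlt
        · exact absurd h (Nat.ne_of_lt (hmono t ht t' ht' hlt))
        · exact absurd h.symm (Nat.ne_of_lt (hmono t' ht' t ht hlt))
      have himage : (Tc c).image N = Finset.Icc 1 ((Tc c).card) := by
        apply Finset.eq_of_subset_of_card_le
        · intro r hr
          rw [Finset.mem_image] at hr
          obtain ⟨t, ht, rfl⟩ := hr
          rw [Finset.mem_Icc]
          constructor
          · rw [hNt t ht]
            refine Finset.card_pos.mpr ⟨t, Finset.mem_filter.mpr ⟨ht, le_refl t⟩⟩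
          · rw [hNt t ht]
            exact Finset.card_le_card (Finset.filter_subset _ _)
        · rw [Nat.card_Icc]
          rw [Finset.card_image_of_injOn hinj]
          omega
      show ∑ t ∈ Tc c, M c (N t) = ∑ r ∈ Finset.Icc 1 ((Tc c).card), M c r
      rw [← himage]
      exact (Finset.sum_image hinj).symm
    -- step 4: convexity bound  T * S c n ≤ n * S c T  for n ≤ T
    have step4 : ∀ (c : Fin m) (n : ℕ), n ≤ T →
        (T : ℝ) * S c n ≤ (n : ℝ) * S c T := by
      intro c n hn
      rcases Nat.eq_zero_or_pos n with rfl | hnpos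
      · simp [hS]
      · have hA : S c n ≤ (n : ℝ) * M c n := by
          have := Finset.sum_le_card_nsmul (Finset.Icc 1 n) (fun r => M c r) (M c n)
            (fun r hr => by
              rw [Finset.mem_Icc] at hr
              exact Mmono c r n hr.1 hr.2)
          rw [Nat.card_Icc] at this
          simpa [nsmul_eq_mul] using this
        have hsplit : S c n + ∑ r ∈ Finset.Ico (n + 1) (T + 1), M c r = S c T := by
          rw [hS]
          simp only [← Finset.Ico_add_one_right_eq_Icc]
          exact Finset.sum_Ico_consecutive _ (by omega) (by omega)
        have hB : ((T - n : ℕ) : ℝ) * M c n ≤ S c T - S c n := by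
          have := Finset.card_nsmul_le_sum (Finset.Ico (n + 1) (T + 1)) (fun r => M c r) (M c n)
            (fun r hr => by
              rw [Finset.mem_Ico] at hr
              exact Mmono c n r hnpos (by omega))
          rw [Nat.card_Ico] at this
          have hc : T + 1 - (n + 1) = T - n := by omega
          rw [hc] at this
          rw [← hsplit]
          simpa [nsmul_eq_mul] using this
        have hTn : ((T - n : ℕ) : ℝ) = (T : ℝ) - (n : ℝ) := by
          push_cast [Nat.cast_sub hn]; ring
        have hn0 : (0 : ℝ) ≤ (n : ℝ) := Nat.cast_nonneg n
        have hTn0 : (0 : ℝ) ≤ (T : ℝ) - (n : ℝ) := by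
          rw [← hTn]; exact Nat.cast_nonneg _
        rw [hTn] at hB
        nlinarith [mul_le_mul_of_nonneg_left hA hTn0, mul_le_mul_of_nonneg_left hB hn0]
    -- step 5: combine
    have hcardsum : ∑ c : Fin m, (Tc c).card = T := by
      have := Finset.card_eq_sum_card_fiberwise
        (f := fun t : Fin T => cl (I t)) (s := Finset.univ) (t := Finset.univ)
        (fun t _ => Finset.mem_univ _)
      simpa [hTc, Finset.card_univ] using this.symm
    have hTcle : ∀ c, (Tc c).card ≤ T := by
      intro c
      have h := Finset.card_filter_le (Finset.univ : Finset (Fin T)) (fun t => cl (I t) = c)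
      simpa [hTc] using h
    have hScV : ∀ c : Fin m, S c T ≤ V := fun c =>
      le_ciSup (f := fun c : Fin m => S c T) (Set.Finite.bddAbove (Set.finite_range _)) c
    have hTpos : (0 : ℝ) < (T : ℝ) := by exact_mod_cast hT
    have key : (T : ℝ) * (∑ c : Fin m, S c ((Tc c).card)) ≤ (T : ℝ) * V := by
      rw [Finset.mul_sum]
      calc ∑ c : Fin m, (T : ℝ) * S c ((Tc c).card)
          ≤ ∑ c : Fin m, ((Tc c).card : ℝ) * V := by
            refine Finset.sum_le_sum fun c _ => ?_
            calc (T : ℝ) * S c ((Tc c).card) ≤ ((Tc c).card : ℝ) * S c T :=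
                step4 c _ (hTcle c)
              _ ≤ ((Tc c).card : ℝ) * V :=
                mul_le_mul_of_nonneg_left (hScV c) (Nat.cast_nonneg _)
        _ = (T : ℝ) * V := by
            rw [← Finset.sum_mul]
            congr 1
            exact_mod_cast hcardsum
    have final : ∑ c : Fin m, S c ((Tc c).card) ≤ V :=
      le_of_mul_le_mul_left key hTpos
    show ∑ t : Fin T, μ (I t) (N t) ≤ V
    calc ∑ t : Fin T, μ (I t) (N t)
        ≤ ∑ t : Fin T, M (cl (I t)) (N t) := step1
      _ = ∑ c : Fin m, ∑ t ∈ Tc c, M c (N t) := step2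
      _ = ∑ c : Fin m, S c ((Tc c).card) := Finset.sum_congr rfl fun c _ => step3 c
      _ ≤ V := final
end

section
/- For a k-armed Rotting Graph-Triggered Bandit with block-diagonal connectivity given by a clique partition 𝒞, the maximum over all action sequences I : {1,…,T} → {1,…,k} of the cumulative reward ∑_{t=1}^T μ_{I_t}(Ñ_{I_t,t}) equals the maximum, over all nonnegative integers (N_C)_{C ∈ 𝒞} with ∑_{C ∈ 𝒞} N_C = T, of ∑_{C ∈ 𝒞} ∑_{n=1}^{N_C} max_{i ∈ C} μ_i(n). -/
open Finset

/-- Summing `g` of the "rank" of each element of `S` is summing `g` over `Icc 1 S.card`. -/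
lemma rank_sum {T : ℕ} (S : Finset (Fin T)) (g : ℕ → ℝ) :
    ∑ t ∈ S, g ((S.filter (· ≤ t)).card) = ∑ n ∈ Finset.Icc 1 S.card, g n := by
  set r : Fin T → ℕ := fun t => (S.filter (· ≤ t)).card with hr
  have hmono : ∀ x ∈ S, ∀ y ∈ S, x < y → r x < r y := by
    intro x hx y hy hxy
    apply Finset.card_lt_card
    rw [Finset.ssubset_iff_of_subset]
    · exact ⟨y, by simp [hy], by simp [hy, not_le.mpr hxy]⟩
    · intro s hs
      simp only [Finset.mem_filter] at hs ⊢
      exact ⟨hs.1, le_trans hs.2 hxy.le⟩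
  have hinj : ∀ x ∈ S, ∀ y ∈ S, r x = r y → x = y := by
    intro x hx y hy hxy
    rcases lt_trichotomy x y with h | h | h
    · exact absurd hxy (hmono x hx y hy h).ne
    · exact h
    · exact absurd hxy.symm (hmono y hy x hx h).ne
  have himg : S.image r = Finset.Icc 1 S.card := by
    apply Finset.eq_of_subset_of_card_le
    · intro n hn
      simp only [Finset.mem_image] at hn
      obtain ⟨t, ht, rfl⟩ := hn
      rw [Finset.mem_Icc]
      constructor
      · exact Finset.card_pos.mpr ⟨t, by simp [ht]⟩
      · exact Finset.card_le_card (Finset.filter_subset _ _)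
    · rw [Nat.card_Icc, Finset.card_image_of_injOn (fun x hx y hy h => hinj x hx y hy h)]
      omega
  rw [← himg, Finset.sum_image hinj]

/-- For a `k`-armed Rotting Graph-Triggered Bandit with block-diagonal
connectivity given by a clique partition (encoded by a surjective clique-assignment map
`cl : Fin k → Fin m`), the maximum over all action sequences of the cumulative reward
equals the maximum over all allocations `(N_C)_C` of `T` pulls among the cliques of
`∑_C ∑_{n=1}^{N_C} max_{i ∈ C} μ_i(n)`. -/
theorem stmt_1
    (k m T : ℕ) (hk : 0 < k) (hT : 0 < T)
    (μ : Fin k → ℕ → ℝ)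
    (hrot : ∀ (i : Fin k) (n : ℕ), 1 ≤ n → μ i (n + 1) ≤ μ i n)
    (cl : Fin k → Fin m) (hcl : Function.Surjective cl) :
    ∃ b : ℝ,
      IsGreatest
        (Set.range fun I : Fin T → Fin k =>
          ∑ t : Fin T,
            μ (I t) ((Finset.univ.filter fun s : Fin T => s ≤ t ∧ cl (I s) = cl (I t)).card))
        b ∧
      IsGreatest
        {y : ℝ | ∃ N : Fin m → ℕ, (∑ c, N c) = T ∧
          y = ∑ c : Fin m, ∑ n ∈ Finset.Icc 1 (N c),
                ⨆ i : {i : Fin k // cl i = c}, μ i.1 n}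
        b := by
  haveI : Nonempty (Fin k) := ⟨⟨0, hk⟩⟩
  haveI hne : ∀ c : Fin m, Nonempty {i : Fin k // cl i = c} := fun c =>
    (hcl c).elim fun i hi => ⟨⟨i, hi⟩⟩
  -- the per-clique best reward function
  set V : Fin m → ℕ → ℝ := fun c n => ⨆ i : {i : Fin k // cl i = c}, μ i.1 n with hV
  have hle : ∀ (c : Fin m) (i : Fin k), cl i = c → ∀ n, μ i n ≤ V c n := by
    intro c i hi n
    exact le_ciSup (f := fun j : {i : Fin k // cl i = c} => μ j.1 n)
      (Set.Finite.bddAbove (Set.finite_range _)) ⟨i, hi⟩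
  have hbest : ∀ (c : Fin m) (n : ℕ), ∃ i : Fin k, cl i = c ∧ μ i n = V c n := by
    intro c n
    obtain ⟨i0, hi0⟩ := Finite.exists_max fun j : {i : Fin k // cl i = c} => μ j.1 n
    exact ⟨i0.1, i0.2, le_antisymm (hle c i0.1 i0.2 n) (ciSup_le hi0)⟩
  choose best hbest1 hbest2 using hbest
  set R : (Fin T → Fin k) → ℝ := fun I =>
    ∑ t : Fin T,
      μ (I t) ((Finset.univ.filter fun s : Fin T => s ≤ t ∧ cl (I s) = cl (I t)).card) with hR
  set A : (Fin m → ℕ) → ℝ := fun N => ∑ c : Fin m, ∑ n ∈ Finset.Icc 1 (N c), V c n with hA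
  -- Direction B : every allocation value is attained by an action sequence
  have dirB : ∀ N : Fin m → ℕ, (∑ c, N c) = T → ∃ I : Fin T → Fin k, R I = A N := by
    intro N hN
    have hcard : Fintype.card (Σₗ c : Fin m, Fin (N c)) = T := by
      simp [Fintype.card_sigma, hN]
    let e := monoEquivOfFin (Σₗ c : Fin m, Fin (N c)) hcard
    have lexle : ∀ p q : Σₗ c : Fin m, Fin (N c),
        p ≤ q → p.1 = q.1 → ((p.2 : ℕ) ≤ (q.2 : ℕ)) := by
      rintro ⟨c, j⟩ ⟨c', j'⟩ hpq h
      dsimp at h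
      subst h
      rcases Sigma.Lex.le_def.mp hpq with h1 | ⟨h2, h3⟩
      · exact absurd h1 (lt_irrefl _)
      · exact h3
    have lexle' : ∀ p q : Σₗ c : Fin m, Fin (N c),
        p.1 = q.1 → ((p.2 : ℕ) ≤ (q.2 : ℕ)) → p ≤ q := by
      rintro ⟨c, j⟩ ⟨c', j'⟩ h hle'
      dsimp at h
      subst h
      exact Sigma.Lex.le_def.mpr (Or.inr ⟨rfl, hle'⟩)
    have hgen : ∀ (p : Σₗ c : Fin m, Fin (N c)) (c : Fin m), p.1 = c → ∀ x : Fin (N c),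
        (x : ℕ) = (p.2 : ℕ) → (⟨c, x⟩ : Σₗ c : Fin m, Fin (N c)) = p := by
      rintro ⟨c', j⟩ c h x hx
      dsimp at h
      subst h
      dsimp at hx
      obtain rfl : x = j := Fin.ext hx
      rfl
    have hcount : ∀ t : Fin T,
        (Finset.univ.filter fun s : Fin T => s ≤ t ∧ (e s).1 = (e t).1).card
          = ((e t).2 : ℕ) + 1 := by
      intro t
      rw [← Finset.card_range (((e t).2 : ℕ) + 1)]
      refine Finset.card_bij' (fun s _ => ((e s).2 : ℕ))
        (fun n hn => e.symm ⟨(e t).1,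
          ⟨n, Nat.lt_of_lt_of_le (Finset.mem_range.mp hn) ((e t).2.isLt)⟩⟩)
        ?hi ?hj ?left ?right
      case hi =>
        intro s hs
        simp only [Finset.mem_filter, Finset.mem_univ, true_and] at hs
        exact Finset.mem_range.mpr
          (Nat.lt_succ_of_le (lexle (e s) (e t) (e.le_iff_le.mpr hs.1) hs.2))
      case hj =>
        intro n hn
        simp only [Finset.mem_filter, Finset.mem_univ, true_and]
        refine ⟨?_, ?_⟩
        · rw [← e.le_iff_le]
          refine (e.apply_symm_apply _).trans_le ?_
          exact lexle' _ _ rfl (by simpa using Nat.lt_succ_iff.mp (Finset.mem_range.mp hn))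
        · have h := congrArg (fun p : Σₗ c : Fin m, Fin (N c) => p.1) (e.apply_symm_apply
            (⟨(e t).1, ⟨n, Nat.lt_of_lt_of_le (Finset.mem_range.mp hn) ((e t).2.isLt)⟩⟩ :
              Σₗ c : Fin m, Fin (N c)))
          exact h
      case left =>
        intro s hs
        simp only [Finset.mem_filter, Finset.mem_univ, true_and] at hs
        refine e.symm_apply_eq.mpr ?_
        apply hgen (e s) (e t).1 hs.2
        rfl
      case right =>
        intro n hn
        exact congrArg (fun p : Σₗ c : Fin m, Fin (N c) => (p.2 : ℕ)) (e.apply_symm_apply _)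
    refine ⟨fun t => best (e t).1 (((e t).2 : ℕ) + 1), ?_⟩
    have hclI : ∀ t : Fin T, cl (best (e t).1 (((e t).2 : ℕ) + 1)) = (e t).1 := fun t =>
      hbest1 _ _
    have step : R (fun t => best (e t).1 (((e t).2 : ℕ) + 1))
        = ∑ t : Fin T, V (e t).1 (((e t).2 : ℕ) + 1) := by
      rw [hR]
      refine Finset.sum_congr rfl fun t _ => ?_
      simp only [hclI, hcount t, hbest2]
    rw [step]
    have reindex : ∑ t : Fin T, V (e t).1 (((e t).2 : ℕ) + 1)
        = ∑ p : Σₗ c : Fin m, Fin (N c), V p.1 ((p.2 : ℕ) + 1) :=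
      Fintype.sum_equiv e.toEquiv _ _ fun t => rfl
    rw [reindex]
    have reindex2 : ∑ p : Σₗ c : Fin m, Fin (N c), V p.1 ((p.2 : ℕ) + 1)
        = ∑ p : Σ c : Fin m, Fin (N c), V p.1 ((p.2 : ℕ) + 1) :=
      Fintype.sum_equiv (toLex (α := Σ c : Fin m, Fin (N c))).symm _ _ fun p => rfl
    rw [reindex2, hA]
    rw [← Finset.univ_sigma_univ, Finset.sum_sigma]
    refine Finset.sum_congr rfl fun c _ => ?_
    rw [Fin.sum_univ_eq_sum_range (fun j => V c (j + 1)) (N c)]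
    rw [← Finset.Ico_add_one_right_eq_Icc, Finset.sum_Ico_eq_sum_range]
    simp [add_comm]
  -- Direction A : every sequence value is dominated by some allocation value
  have dirA : ∀ I : Fin T → Fin k, ∃ N : Fin m → ℕ, (∑ c, N c) = T ∧ R I ≤ A N := by
    intro I
    set N : Fin m → ℕ := fun c => (Finset.univ.filter fun t : Fin T => cl (I t) = c).card
      with hNdef
    have hNsum : ∑ c, N c = T := by
      have := Finset.card_eq_sum_card_fiberwise
        (f := fun t : Fin T => cl (I t)) (s := Finset.univ) (t := Finset.univ)
        fun x _ => Finset.mem_univ _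
      simpa using this.symm
    refine ⟨N, hNsum, ?_⟩
    have step1 : R I ≤ ∑ t : Fin T,
        V (cl (I t)) ((Finset.univ.filter fun s : Fin T => s ≤ t ∧ cl (I s) = cl (I t)).card) :=
      Finset.sum_le_sum fun t _ => hle _ _ rfl _
    refine le_trans step1 (le_of_eq ?_)
    rw [← Finset.sum_fiberwise Finset.univ (fun t => cl (I t))
      (fun t => V (cl (I t))
        ((Finset.univ.filter fun s : Fin T => s ≤ t ∧ cl (I s) = cl (I t)).card)), hA]
    refine Finset.sum_congr rfl fun c _ => ?_
    have hfib : ∀ t ∈ Finset.univ.filter fun t : Fin T => cl (I t) = c,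
        V (cl (I t))
            ((Finset.univ.filter fun s : Fin T => s ≤ t ∧ cl (I s) = cl (I t)).card)
          = V c (((Finset.univ.filter fun t : Fin T => cl (I t) = c).filter (· ≤ t)).card) := by
      intro t ht
      simp only [Finset.mem_filter, Finset.mem_univ, true_and] at ht
      rw [ht, Finset.filter_filter]
      congr 2
      apply Finset.filter_congr
      intro s _
      exact and_comm
    rw [Finset.sum_congr rfl hfib]
    exact rank_sum _ _
  -- assemble
  obtain ⟨I₀, hI₀⟩ := Finite.exists_max R
  obtain ⟨N₀, hN₀sum, hN₀⟩ := dirA I₀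
  obtain ⟨I₁, hI₁⟩ := dirB N₀ hN₀sum
  have hb : A N₀ = R I₀ := le_antisymm (hI₁ ▸ hI₀ I₁) hN₀
  refine ⟨R I₀, ⟨⟨I₀, rfl⟩, ?_⟩, ⟨⟨N₀, hN₀sum, hb.symm⟩, ?_⟩⟩
  · rintro y ⟨I, rfl⟩
    exact hI₀ I
  · rintro y ⟨N, hNs, rfl⟩
    obtain ⟨I, hI⟩ := dirB N hNs
    exact le_trans (le_of_eq hI.symm) (hI₀ I)
end

section
/- Let H be a finite simple graph with vertex set V and let T ≥ 1. In the Rising GTB instance built from H (arm set A = V × {1,…,T}, triggering and rewards as defined), there exists an action sequence I : {1,…,T} → A whose cumulative reward ∑_{t=1}^T μ_{I_t}(Ñ_{I_t,t}) is at least ∑_{t=1}^T (1 + t/T²) if and only if H contains a clique of size T, i.e., T pairwise adjacent distinct vertices. (This equivalence is the core of the reduction showing that computing the optimal policy in Rising GTBs with general connectivity matrices is NP-hard.) -/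
lemma aux_bound (T t j c : ℕ) (hT : 1 ≤ T) (hc : c ≤ t + 1) :
    min (1 + ((j : ℝ) + 1) / (T : ℝ) ^ 2)
      ((c : ℝ) / ((j : ℝ) + 1) * (1 + ((j : ℝ) + 1) / (T : ℝ) ^ 2))
      ≤ 1 + ((t : ℝ) + 1) / (T : ℝ) ^ 2 := by
  have hT0 : (0 : ℝ) < (T : ℝ) ^ 2 := by
    have : (1 : ℝ) ≤ (T : ℝ) := by exact_mod_cast hT
    positivity
  have hx : (0 : ℝ) < (j : ℝ) + 1 := by positivity
  have hcR : (c : ℝ) ≤ (t : ℝ) + 1 := by exact_mod_cast hc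
  rcases le_or_gt c (j + 1) with h | h
  · refine (min_le_right _ _).trans ?_
    have h1 : (c : ℝ) / ((j : ℝ) + 1) ≤ 1 := by
      rw [div_le_one hx]; exact_mod_cast h
    have expand : (c : ℝ) / ((j : ℝ) + 1) * (1 + ((j : ℝ) + 1) / (T : ℝ) ^ 2)
        = (c : ℝ) / ((j : ℝ) + 1) + (c : ℝ) / (T : ℝ) ^ 2 := by
      field_simp
    rw [expand]
    have h2 : (c : ℝ) / (T : ℝ) ^ 2 ≤ ((t : ℝ) + 1) / (T : ℝ) ^ 2 := by gcongr
    linarith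
  · refine (min_le_left _ _).trans ?_
    have : (j : ℝ) + 1 ≤ (t : ℝ) + 1 := by
      have : j + 1 ≤ t + 1 := le_trans h.le hc
      exact_mod_cast this
    gcongr

lemma aux_eq (T t j c : ℕ) (hT : 1 ≤ T) (hc : c ≤ t + 1)
    (h : 1 + ((t : ℝ) + 1) / (T : ℝ) ^ 2 ≤
      min (1 + ((j : ℝ) + 1) / (T : ℝ) ^ 2)
        ((c : ℝ) / ((j : ℝ) + 1) * (1 + ((j : ℝ) + 1) / (T : ℝ) ^ 2))) :
    j = t ∧ c = t + 1 := by
  have hT0 : (0 : ℝ) < (T : ℝ) ^ 2 := by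
    have : (1 : ℝ) ≤ (T : ℝ) := by exact_mod_cast hT
    positivity
  have hx : (0 : ℝ) < (j : ℝ) + 1 := by positivity
  have hcR : (c : ℝ) ≤ (t : ℝ) + 1 := by exact_mod_cast hc
  have h1 := h.trans (min_le_left _ _)
  have h2 := h.trans (min_le_right _ _)
  have htj : (t : ℝ) + 1 ≤ (j : ℝ) + 1 := by
    have := sub_le_sub_right h1 1
    rw [add_sub_cancel_left, add_sub_cancel_left] at this
    exact (div_le_div_iff_of_pos_right hT0).mp this
  have expand : (c : ℝ) / ((j : ℝ) + 1) * (1 + ((j : ℝ) + 1) / (T : ℝ) ^ 2)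
      = (c : ℝ) / ((j : ℝ) + 1) + (c : ℝ) / (T : ℝ) ^ 2 := by
    field_simp
  rw [expand] at h2
  have h3 : (c : ℝ) / (T : ℝ) ^ 2 ≤ ((t : ℝ) + 1) / (T : ℝ) ^ 2 := by gcongr
  have h4 : (1 : ℝ) ≤ (c : ℝ) / ((j : ℝ) + 1) := by linarith
  have h5 : (j : ℝ) + 1 ≤ (c : ℝ) := by
    rw [le_div_iff₀ hx, one_mul] at h4; linarith
  have hjt : j = t := by
    have : (j : ℝ) ≤ (t : ℝ) := by linarith
    have h6 : j ≤ t := by exact_mod_cast this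
    have h7 : t ≤ j := by
      have : (t : ℝ) ≤ (j : ℝ) := by linarith
      exact_mod_cast this
    omega
  refine ⟨hjt, ?_⟩
  have : (t : ℝ) + 1 ≤ (c : ℝ) := by rw [hjt] at h5; linarith
  have : t + 1 ≤ c := by exact_mod_cast this
  omega


lemma aux_card_le (T : ℕ) (t : Fin T) :
    (Finset.univ.filter fun s : Fin T => s ≤ t).card = (t : ℕ) + 1 := by
  have : (Finset.univ.filter fun s : Fin T => s ≤ t) = Finset.Iic t := by
    ext s; simp
  rw [this, Fin.card_Iic]

lemma aux_target (T : ℕ) :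
    (∑ t ∈ Finset.Icc 1 T, (1 + (t : ℝ) / (T : ℝ) ^ 2)) =
      ∑ t : Fin T, (1 + ((t : ℕ) + 1 : ℝ) / (T : ℝ) ^ 2) := by
  have hmap : Finset.Icc 1 T =
      Finset.map ⟨Nat.succ, Nat.succ_injective⟩ (Finset.range T) := by
    ext x
    simp only [Finset.mem_Icc, Finset.mem_map, Finset.mem_range,
      Function.Embedding.coeFn_mk, Nat.succ_eq_add_one]
    constructor
    · rintro ⟨h1, h2⟩; exact ⟨x - 1, by omega, by omega⟩
    · rintro ⟨a, ha, rfl⟩; omega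
  rw [hmap, Finset.sum_map, Fin.sum_univ_eq_sum_range
    (fun i => (1 + ((i : ℕ) + 1 : ℝ) / (T : ℝ) ^ 2))]
  apply Finset.sum_congr rfl
  intro x _
  show (1 : ℝ) + ((x + 1 : ℕ) : ℝ) / (T : ℝ) ^ 2 = 1 + ((x : ℕ) + 1 : ℝ) / (T : ℝ) ^ 2
  push_cast
  ring

/-- Rising GTB hardness reduction: in the Rising GTB instance built from
a finite simple graph `H` (arms `V × {1,…,T}` encoded as `V × Fin T` with the second
component `j` standing for `τ = j + 1`; pulling `(v,τ)` triggers `(v',τ')` iff they are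
equal or `v ~ v'`; rewards `μ_{(v,τ)}(n) = min{1 + τ/T², (n/τ)(1 + τ/T²)}`), there is an
action sequence with cumulative reward at least `∑_{t=1}^T (1 + t/T²)` iff `H` contains
a clique of size `T`. -/
theorem stmt_4
    (V : Type) [Fintype V] [DecidableEq V]
    (H : SimpleGraph V) [DecidableRel H.Adj]
    (T : ℕ) (hT : 1 ≤ T) :
    (∃ I : Fin T → V × Fin T,
        (∑ t ∈ Finset.Icc 1 T, (1 + (t : ℝ) / (T : ℝ) ^ 2)) ≤
          ∑ t : Fin T,
            min (1 + (((I t).2 : ℕ) + 1 : ℝ) / (T : ℝ) ^ 2)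
              (((Finset.univ.filter fun s : Fin T =>
                    s ≤ t ∧ (I s = I t ∨ H.Adj (I s).1 (I t).1)).card : ℝ)
                  / (((I t).2 : ℕ) + 1 : ℝ)
                * (1 + (((I t).2 : ℕ) + 1 : ℝ) / (T : ℝ) ^ 2)))
      ↔ ∃ s : Finset V, H.IsNClique T s := by
  constructor
  · rintro ⟨I, hI⟩
    set c : Fin T → ℕ := fun t => (Finset.univ.filter fun s : Fin T =>
        s ≤ t ∧ (I s = I t ∨ H.Adj (I s).1 (I t).1)).card with hc_def
    have hsub : ∀ t : Fin T, (Finset.univ.filter fun s : Fin T =>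
        s ≤ t ∧ (I s = I t ∨ H.Adj (I s).1 (I t).1)) ⊆
        (Finset.univ.filter fun s : Fin T => s ≤ t) := by
      intro t s hs
      simp only [Finset.mem_filter, Finset.mem_univ, true_and] at *
      exact hs.1
    have hcle : ∀ t : Fin T, c t ≤ (t : ℕ) + 1 := by
      intro t
      calc c t ≤ (Finset.univ.filter fun s : Fin T => s ≤ t).card :=
            Finset.card_le_card (hsub t)
        _ = (t : ℕ) + 1 := aux_card_le T t
    have hub : ∀ t ∈ Finset.univ, min (1 + (((I t).2 : ℕ) + 1 : ℝ) / (T : ℝ) ^ 2)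
        ((c t : ℝ) / (((I t).2 : ℕ) + 1 : ℝ)
          * (1 + (((I t).2 : ℕ) + 1 : ℝ) / (T : ℝ) ^ 2))
        ≤ 1 + ((t : ℕ) + 1 : ℝ) / (T : ℝ) ^ 2 := by
      intro t _
      exact aux_bound T t (I t).2 (c t) hT (hcle t)
    rw [aux_target] at hI
    have hle : (∑ t : Fin T, min (1 + (((I t).2 : ℕ) + 1 : ℝ) / (T : ℝ) ^ 2)
        ((c t : ℝ) / (((I t).2 : ℕ) + 1 : ℝ)
          * (1 + (((I t).2 : ℕ) + 1 : ℝ) / (T : ℝ) ^ 2)))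
        ≤ ∑ t : Fin T, (1 + ((t : ℕ) + 1 : ℝ) / (T : ℝ) ^ 2) :=
      Finset.sum_le_sum hub
    have heq := (Finset.sum_eq_sum_iff_of_le hub).mp (le_antisymm hle hI)
    have hkey : ∀ t : Fin T, ((I t).2 : ℕ) = (t : ℕ) ∧
        ∀ s : Fin T, s ≤ t → (I s = I t ∨ H.Adj (I s).1 (I t).1) := by
      intro t
      obtain ⟨hj, hcard⟩ := aux_eq T t (I t).2 (c t) hT (hcle t)
        ((heq t (Finset.mem_univ t)).ge)
      refine ⟨hj, ?_⟩
      have hfe : (Finset.univ.filter fun s : Fin T =>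
          s ≤ t ∧ (I s = I t ∨ H.Adj (I s).1 (I t).1)) =
          (Finset.univ.filter fun s : Fin T => s ≤ t) := by
        apply Finset.eq_of_subset_of_card_le (hsub t)
        rw [aux_card_le]
        exact hcard.ge
      intro s hs
      have : s ∈ (Finset.univ.filter fun s : Fin T =>
          s ≤ t ∧ (I s = I t ∨ H.Adj (I s).1 (I t).1)) := by
        rw [hfe]
        simp [hs]
      simp only [Finset.mem_filter, Finset.mem_univ, true_and] at this
      exact this.2
    have hadj : ∀ s t : Fin T, s < t → H.Adj (I s).1 (I t).1 := by
      intro s t hst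
      rcases (hkey t).2 s hst.le with h | h
      · exfalso
        have h2 : ((I s).2 : ℕ) = (s : ℕ) := (hkey s).1
        have h3 : ((I t).2 : ℕ) = (t : ℕ) := (hkey t).1
        have : (s : ℕ) = (t : ℕ) := by rw [← h2, ← h3, h]
        exact absurd (Fin.ext this) hst.ne
      · exact h
    have hfadj : ∀ s t : Fin T, s ≠ t → H.Adj (I s).1 (I t).1 := by
      intro s t h
      rcases h.lt_or_gt with h' | h'
      · exact hadj s t h'
      · exact (hadj t s h').symm
    have hfinj : Function.Injective (fun t : Fin T => (I t).1) := by
      intro s t h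
      by_contra hne
      exact (hfadj s t hne).ne h
    refine ⟨Finset.univ.image (fun t : Fin T => (I t).1), ?_, ?_⟩
    · intro x hx y hy hxy
      simp only [Finset.coe_image, Set.mem_image, Finset.coe_univ,
        Set.image_univ, Set.mem_range] at hx hy
      obtain ⟨a, rfl⟩ := hx
      obtain ⟨b, rfl⟩ := hy
      exact hfadj a b (fun h => hxy (by rw [h]))
    · rw [Finset.card_image_of_injective _ hfinj, Finset.card_univ,
        Fintype.card_fin]
  · rintro ⟨S, hS⟩
    have hcard : S.card = T := hS.2
    set g : Fin T → V := fun i => (S.equivFin.symm (Fin.cast hcard.symm i) : V)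
      with hg_def
    have hginj : Function.Injective g := by
      intro a b h
      have := Subtype.coe_injective h
      have := S.equivFin.symm.injective this
      exact Fin.cast_injective _ this
    have hgmem : ∀ i, g i ∈ S := fun i => (S.equivFin.symm (Fin.cast hcard.symm i)).2
    have hgadj : ∀ s t : Fin T, s ≠ t → H.Adj (g s) (g t) := by
      intro s t h
      exact hS.1 (hgmem s) (hgmem t) (fun he => h (hginj he))
    refine ⟨fun t => (g t, t), ?_⟩
    rw [aux_target]
    apply le_of_eq
    apply Finset.sum_congr rfl
    intro t _
    have hfil : (Finset.univ.filter fun s : Fin T =>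
        s ≤ t ∧ ((g s, s) = (g t, t) ∨ H.Adj (g s) (g t))) =
        (Finset.univ.filter fun s : Fin T => s ≤ t) := by
      apply Finset.filter_congr
      intro s _
      simp only [and_iff_left_iff_imp]
      intro _
      rcases eq_or_ne s t with rfl | h
      · exact Or.inl rfl
      · exact Or.inr (hgadj s t h)
    show (1 : ℝ) + ((t : ℕ) + 1 : ℝ) / (T : ℝ) ^ 2 =
      min (1 + ((t : ℕ) + 1 : ℝ) / (T : ℝ) ^ 2)
        (((Finset.univ.filter fun s : Fin T =>
            s ≤ t ∧ ((g s, s) = (g t, t) ∨ H.Adj (g s) (g t))).card : ℝ)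
          / ((t : ℕ) + 1 : ℝ) * (1 + ((t : ℕ) + 1 : ℝ) / (T : ℝ) ^ 2))
    rw [hfil, aux_card_le]
    have hx : ((t : ℕ) + 1 : ℝ) ≠ 0 := by positivity
    rw [show (((t : ℕ) + 1 : ℕ) : ℝ) = ((t : ℕ) + 1 : ℝ) by push_cast; ring,
      div_self hx, one_mul, min_self]
end

section
/- Let H be a finite simple graph with vertex set V and let T ≥ 1. In the Rotting GTB instance built from H (arm set V, triggering via adjacency, rewards μ_v(n) = max{2 − n, 0}), there exists an action sequence I : {1,…,T} → V whose cumulative reward ∑_{t=1}^T μ_{I_t}(Ñ_{I_t,t}) is at least T if and only if H contains an independent set of size T, i.e., T pairwise non-adjacent distinct vertices. (This equivalence is the core of the reduction showing that computing the optimal policy in Rotting GTBs with general connectivity matrices is NP-hard.) -/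
/-- Rotting GTB hardness reduction: in the Rotting GTB instance built
from a finite simple graph `H` (arm set `V`; pulling `v` triggers `v'` iff `v = v'` or
`v ~ v'`; rewards `μ_v(n) = max{2 − n, 0}`), there is an action sequence whose cumulative
reward over horizon `T` is at least `T` iff `H` contains an independent set of size `T`. -/
theorem stmt_5
    (V : Type) [Fintype V] [DecidableEq V]
    (H : SimpleGraph V) [DecidableRel H.Adj]
    (T : ℕ) (hT : 1 ≤ T) :
    (∃ I : Fin T → V,
        (T : ℝ) ≤ ∑ t : Fin T,
          max (2 - ((Finset.univ.filter fun s : Fin T =>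
                s ≤ t ∧ (I s = I t ∨ H.Adj (I s) (I t))).card : ℝ)) 0)
      ↔ ∃ s : Finset V, s.card = T ∧ ∀ u ∈ s, ∀ v ∈ s, ¬ H.Adj u v := by
  constructor
  · rintro ⟨I, hI⟩
    set F : Fin T → Finset (Fin T) := fun t =>
      Finset.univ.filter fun s : Fin T => s ≤ t ∧ (I s = I t ∨ H.Adj (I s) (I t)) with hF
    have hmem : ∀ t : Fin T, t ∈ F t := by
      intro t; simp [hF]
    have hle : ∀ t : Fin T, max (2 - ((F t).card : ℝ)) 0 ≤ 1 := by
      intro t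
      have h1 : 1 ≤ (F t).card := Finset.card_pos.mpr ⟨t, hmem t⟩
      have h1' : (1 : ℝ) ≤ ((F t).card : ℝ) := by exact_mod_cast h1
      apply max_le <;> linarith
    have hsum_le : ∑ t : Fin T, max (2 - ((F t).card : ℝ)) 0 ≤ (T : ℝ) := by
      calc ∑ t : Fin T, max (2 - ((F t).card : ℝ)) 0
          ≤ ∑ _t : Fin T, (1 : ℝ) := Finset.sum_le_sum (fun t _ => hle t)
        _ = (T : ℝ) := by simp
    have hsum_eq : ∑ t : Fin T, max (2 - ((F t).card : ℝ)) 0 = ∑ _t : Fin T, (1 : ℝ) := by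
      have : ∑ _t : Fin T, (1 : ℝ) = (T : ℝ) := by simp
      linarith
    have heach : ∀ t : Fin T, max (2 - ((F t).card : ℝ)) 0 = 1 := by
      intro t
      exact (Finset.sum_eq_sum_iff_of_le (fun t _ => hle t)).mp hsum_eq t (Finset.mem_univ t)
    have hcard : ∀ t : Fin T, (F t).card = 1 := by
      intro t
      have h := heach t
      rcases max_cases (2 - ((F t).card : ℝ)) 0 with ⟨he, _⟩ | ⟨he, _⟩
      · rw [he] at h
        have : ((F t).card : ℝ) = 1 := by linarith
        exact_mod_cast this
      · rw [he] at h; norm_num at h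
    have hkey : ∀ t s : Fin T, s ≤ t → (I s = I t ∨ H.Adj (I s) (I t)) → s = t := by
      intro t s hst hor
      have hsF : s ∈ F t := by simp [hF, hst, hor]
      obtain ⟨a, ha⟩ := Finset.card_eq_one.mp (hcard t)
      have h1 : s = a := by rwa [ha, Finset.mem_singleton] at hsF
      have h2 : t = a := by have := hmem t; rwa [ha, Finset.mem_singleton] at this
      rw [h1, h2]
    have hinj : Function.Injective I := by
      intro a b hab
      rcases le_total a b with h | h
      · exact hkey b a h (Or.inl hab)
      · exact (hkey a b h (Or.inl hab.symm)).symm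
    refine ⟨Finset.univ.image I, ?_, ?_⟩
    · rw [Finset.card_image_of_injective _ hinj, Finset.card_univ, Fintype.card_fin]
    · intro u hu v hv hadj
      obtain ⟨a, _, ha⟩ := Finset.mem_image.mp hu
      obtain ⟨b, _, hb⟩ := Finset.mem_image.mp hv
      subst ha; subst hb
      rcases le_total a b with h | h
      · have := hkey b a h (Or.inr hadj)
        subst this
        exact H.irrefl hadj
      · have := hkey a b h (Or.inr hadj.symm)
        subst this
        exact H.irrefl hadj
  · rintro ⟨s, hs, hind⟩
    set I : Fin T → V := fun t => (s.equivFin.symm ⟨t, by omega⟩ : s) with hI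
    have hIs : ∀ t, I t ∈ s := fun t => (s.equivFin.symm ⟨t, by omega⟩).2
    have hinj : Function.Injective I := by
      intro a b hab
      have : s.equivFin.symm ⟨a, by omega⟩ = s.equivFin.symm ⟨b, by omega⟩ :=
        Subtype.ext hab
      have := s.equivFin.symm.injective this
      simpa [Fin.ext_iff] using congrArg Fin.val this
    refine ⟨I, ?_⟩
    have hfilt : ∀ t : Fin T, (Finset.univ.filter fun x : Fin T =>
        x ≤ t ∧ (I x = I t ∨ H.Adj (I x) (I t))) = {t} := by
      intro t
      ext x
      simp only [Finset.mem_filter, Finset.mem_univ, true_and, Finset.mem_singleton]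
      constructor
      · rintro ⟨hxt, h | h⟩
        · exact hinj h
        · exact absurd h (hind _ (hIs x) _ (hIs t))
      · rintro rfl; exact ⟨le_refl _, Or.inl rfl⟩
    have : ∀ t : Fin T, max (2 - (((Finset.univ.filter fun x : Fin T =>
        x ≤ t ∧ (I x = I t ∨ H.Adj (I x) (I t))).card : ℕ) : ℝ)) 0 = 1 := by
      intro t
      rw [hfilt t]
      norm_num
    rw [Finset.sum_congr rfl (fun t _ => this t)]
    simp
end

section
/- Let μ : ℕ → ℝ satisfy γ(n) := μ(n+1) − μ(n) ≥ 0 and γ(n+1) ≤ γ(n) for all n. Let y, x, m, t be natural numbers with y < x ≤ m and x ≤ t. Define the extrapolated estimate b := μ(x) + (t − x)·(μ(x) − μ(y))/(x − y). Then b ≥ μ(x), and the bias satisfies b − μ(m) ≤ (t − x)·γ(y). -/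
private lemma mono_aux (μ : ℕ → ℝ) (hpos : ∀ n, 0 ≤ μ (n + 1) - μ n) :
    ∀ a b : ℕ, a ≤ b → μ a ≤ μ b := by
  intro a b hab
  induction b, hab using Nat.le_induction with
  | base => exact le_refl _
  | succ n hn ih => linarith [hpos n]

private lemma gam_mono (μ : ℕ → ℝ)
    (hconc : ∀ n, μ (n + 2) - μ (n + 1) ≤ μ (n + 1) - μ n) :
    ∀ a b : ℕ, a ≤ b → μ (b + 1) - μ b ≤ μ (a + 1) - μ a := by
  intro a b hab
  induction b, hab using Nat.le_induction with
  | base => exact le_refl _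
  | succ n hn ih => linarith [hconc n]

private lemma sum_bound (μ : ℕ → ℝ)
    (hconc : ∀ n, μ (n + 2) - μ (n + 1) ≤ μ (n + 1) - μ n) :
    ∀ a b : ℕ, a ≤ b → μ b - μ a ≤ ((b : ℝ) - a) * (μ (a + 1) - μ a) := by
  intro a b hab
  induction b, hab using Nat.le_induction with
  | base => simp
  | succ n hn ih =>
    have hg := gam_mono μ hconc a n hn
    push_cast
    nlinarith

/-- For a nondecreasing concave `μ : ℕ → ℝ` (nonnegative, nonincreasing
increments `γ(n) = μ(n+1) − μ(n)`) and naturals `y < x ≤ m`, `x ≤ t`, the extrapolated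
estimate `b = μ(x) + (t − x)(μ(x) − μ(y))/(x − y)` satisfies `b ≥ μ(x)` and
`b − μ(m) ≤ (t − x)·γ(y)`. -/
theorem stmt_7 (μ : ℕ → ℝ)
    (hpos : ∀ n, 0 ≤ μ (n + 1) - μ n)
    (hconc : ∀ n, μ (n + 2) - μ (n + 1) ≤ μ (n + 1) - μ n)
    (y x m t : ℕ) (hyx : y < x) (hxm : x ≤ m) (hxt : x ≤ t) :
    μ x ≤ μ x + ((t : ℝ) - x) * (μ x - μ y) / ((x : ℝ) - y) ∧
    (μ x + ((t : ℝ) - x) * (μ x - μ y) / ((x : ℝ) - y)) - μ m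
      ≤ ((t : ℝ) - x) * (μ (y + 1) - μ y) := by
  have hxy : (0 : ℝ) < (x : ℝ) - y := by
    have : (y : ℝ) < x := by exact_mod_cast hyx
    linarith
  have htx : (0 : ℝ) ≤ (t : ℝ) - x := by
    have : (x : ℝ) ≤ t := by exact_mod_cast hxt
    linarith
  have hμyx : μ y ≤ μ x := mono_aux μ hpos y x hyx.le
  have hμxm : μ x ≤ μ m := mono_aux μ hpos x m hxm
  have hsum : μ x - μ y ≤ ((x : ℝ) - y) * (μ (y + 1) - μ y) :=
    sum_bound μ hconc y x hyx.le
  constructor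
  · have : 0 ≤ ((t : ℝ) - x) * (μ x - μ y) / ((x : ℝ) - y) :=
      div_nonneg (mul_nonneg htx (by linarith)) hxy.le
    linarith
  · have key : ((t : ℝ) - x) * (μ x - μ y) / ((x : ℝ) - y)
        ≤ ((t : ℝ) - x) * (μ (y + 1) - μ y) := by
      rw [div_le_iff₀ hxy]
      nlinarith
    linarith
end

section
/- Let μ : ℕ → ℝ satisfy γ(n) := μ(n+1) − μ(n) ≥ 0 and γ(n+1) ≤ γ(n) for all n. For natural numbers y, x, t with y < x ≤ t, define f(t; x, y) := μ(x) + (t − x)·(μ(x) − μ(y))/(x − y). Then for all natural numbers y, x, t with y < x − 1 and x ≤ t, one has f(t; x, y) ≤ f(t; x − 1, y); that is, the extrapolation estimator is nonincreasing in its first argument x. -/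
private lemma key_aux (μ : ℕ → ℝ)
    (hpos : ∀ n, 0 ≤ μ (n + 1) - μ n)
    (hconc : ∀ n, μ (n + 2) - μ (n + 1) ≤ μ (n + 1) - μ n)
    (y : ℕ) : ∀ a, y ≤ a → ((a : ℝ) - y) * (μ (a + 1) - μ a) ≤ μ a - μ y := by
  intro a
  induction a with
  | zero => intro h; interval_cases y; simp
  | succ n ih =>
    intro h
    rcases Nat.eq_or_lt_of_le h with h' | h'
    · subst h'; simp
    · have hy : y ≤ n := Nat.lt_succ_iff.mp h'
      have hn := ih hy
      have hc := hconc n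
      have hp := hpos (n + 1)
      have hny : (0:ℝ) ≤ (n : ℝ) - y := by
        have : (y:ℝ) ≤ n := by exact_mod_cast hy
        linarith
      push_cast
      nlinarith [mul_le_mul_of_nonneg_left hc hny]

/-- For a nondecreasing concave `μ : ℕ → ℝ`, the linear extrapolation
estimator `f(t; x, y) = μ(x) + (t − x)(μ(x) − μ(y))/(x − y)` is nonincreasing in its
first argument: for `y < x − 1` and `x ≤ t`, `f(t; x, y) ≤ f(t; x − 1, y)`. -/
theorem stmt_9 (μ : ℕ → ℝ)
    (hpos : ∀ n, 0 ≤ μ (n + 1) - μ n)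
    (hconc : ∀ n, μ (n + 2) - μ (n + 1) ≤ μ (n + 1) - μ n)
    (y x t : ℕ) (hyx : y + 1 < x) (hxt : x ≤ t) :
    μ x + ((t : ℝ) - x) * (μ x - μ y) / ((x : ℝ) - y)
      ≤ μ (x - 1) + ((t : ℝ) - ((x : ℝ) - 1)) * (μ (x - 1) - μ y) / (((x : ℝ) - 1) - y) := by
  obtain ⟨a, rfl⟩ : ∃ a, x = a + 1 := ⟨x - 1, by omega⟩
  have hya : y < a := by omega
  have key := key_aux μ hpos hconc y a (le_of_lt hya)
  have hD : (0:ℝ) < (a : ℝ) - y := by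
    have : (y:ℝ) < a := by exact_mod_cast hya
    linarith
  have hD1 : (0:ℝ) < ((a : ℝ) + 1) - y := by linarith
  have ht : ((a : ℝ) + 1) ≤ t := by exact_mod_cast hxt
  have hμy : μ y ≤ μ a := by
    nlinarith [hpos a, key]
  simp only [Nat.add_sub_cancel]
  push_cast
  set γ := μ (a + 1) - μ a with hγ
  have hγ0 : 0 ≤ γ := hpos a
  -- slopes
  set s' := (μ a - μ y) / ((a : ℝ) - y) with hs'
  set s := (μ (a + 1) - μ y) / (((a : ℝ) + 1) - y) with hs
  have hγs' : γ ≤ s' := by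
    rw [hs', le_div_iff₀ hD]; linarith [key]
  have hss' : s ≤ s' := by
    rw [hs, hs', div_le_div_iff₀ hD1 hD]; nlinarith [key]
  have hs0 : 0 ≤ s' := le_trans hγ0 hγs'
  have e1 : ((t:ℝ) - ((a:ℝ)+1)) * (μ (a+1) - μ y) / (((a:ℝ)+1) - y)
      = ((t:ℝ) - ((a:ℝ)+1)) * s := by rw [hs]; ring
  have e2 : ((t:ℝ) - (((a:ℝ)+1) - 1)) * (μ a - μ y) / ((((a:ℝ)+1) - 1) - y)
      = ((t:ℝ) - (a:ℝ)) * s' := by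
    rw [hs']; simp only [add_sub_cancel_right]; ring
  rw [e1, e2]
  have htx : (0:ℝ) ≤ (t:ℝ) - ((a:ℝ)+1) := by linarith
  have : μ (a + 1) = μ a + γ := by rw [hγ]; ring
  rw [this]
  nlinarith [mul_le_mul_of_nonneg_left hss' htx]
end

section
/- Let μ : ℕ → ℝ satisfy γ(n) := μ(n+1) − μ(n) ≥ 0 and γ(n+1) ≤ γ(n) for all n. Let s : ℕ → ℕ be strictly increasing with s(l) ≥ l for all l. Let N, h, m, t be natural numbers with 1 ≤ h, 2h ≤ N, N < t, and s(N) ≤ m ≤ t. Define the windowed extrapolation estimator μ̃ := (1/h)·∑_{l=N−h+1}^{N} [ μ(s(l)) + (t − l)·(μ(s(l)) − μ(s(l−h)))/h ]. Then: (i) μ(m) ≤ μ̃ (optimism), and (ii) μ̃ − μ(m) ≤ ((2t − 2N + h − 1)·(s(N) − s(N−2h+1))/(2h))·γ(s(N−2h+1)). -/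
/-- Instantaneous bias of the sliding-window extrapolation estimator
for stochastic rising bandits: for a nondecreasing concave `μ`, a strictly increasing
internal-time map `s` with `s(l) ≥ l`, window width `1 ≤ h` with `2h ≤ N`, `N < t`, and
current trigger count `s(N) ≤ m ≤ t`, the estimator
`μ̃ = (1/h) ∑_{l=N−h+1}^{N} [μ(s(l)) + (t − l)(μ(s(l)) − μ(s(l−h)))/h]`
satisfies `μ(m) ≤ μ̃` (optimism) and
`μ̃ − μ(m) ≤ ((2t − 2N + h − 1)(s(N) − s(N−2h+1))/(2h))·γ(s(N−2h+1))`. -/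
theorem stmt_10 (μ : ℕ → ℝ)
    (hpos : ∀ n, 0 ≤ μ (n + 1) - μ n)
    (hconc : ∀ n, μ (n + 2) - μ (n + 1) ≤ μ (n + 1) - μ n)
    (s : ℕ → ℕ) (hs : StrictMono s) (hsl : ∀ l, l ≤ s l)
    (N h m t : ℕ) (hh : 1 ≤ h) (hhN : 2 * h ≤ N) (hNt : N < t)
    (hms : s N ≤ m) (hmt : m ≤ t) :
    μ m ≤ (1 / (h : ℝ)) * ∑ l ∈ Finset.Icc (N - h + 1) N,
        (μ (s l) + ((t : ℝ) - l) * (μ (s l) - μ (s (l - h))) / h) ∧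
    ((1 / (h : ℝ)) * ∑ l ∈ Finset.Icc (N - h + 1) N,
        (μ (s l) + ((t : ℝ) - l) * (μ (s l) - μ (s (l - h))) / h)) - μ m
      ≤ ((2 * (t : ℝ) - 2 * N + h - 1) * ((s N : ℝ) - (s (N - 2 * h + 1) : ℝ)) / (2 * h))
          * (μ (s (N - 2 * h + 1) + 1) - μ (s (N - 2 * h + 1))) := by
  have hh' : (0 : ℝ) < h := by exact_mod_cast hh
  -- increments
  have hanti : ∀ a b : ℕ, a ≤ b → μ (b + 1) - μ b ≤ μ (a + 1) - μ a := by
    intro a b hab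
    induction b, hab using Nat.le_induction with
    | base => exact le_rfl
    | succ b hb ih => exact le_trans (hconc b) ih
  have key_up : ∀ a b : ℕ, a ≤ b → μ b - μ a ≤ ((b : ℝ) - a) * (μ (a + 1) - μ a) := by
    intro a b hab
    induction b, hab using Nat.le_induction with
    | base => simp
    | succ b hb ih =>
      have h1 : μ (b + 1) - μ b ≤ μ (a + 1) - μ a := hanti a b hb
      push_cast
      nlinarith [ih]
  have key_lo : ∀ a b : ℕ, a ≤ b → ((b : ℝ) - a) * (μ (b + 1) - μ b) ≤ μ b - μ a := by
    intro a b hab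
    induction b, hab using Nat.le_induction with
    | base => simp
    | succ b hb ih =>
      have h1 : μ (b + 2) - μ (b + 1) ≤ μ (b + 1) - μ b := hconc b
      have h2 : (0 : ℝ) ≤ (b : ℝ) - a := by
        have : (a : ℝ) ≤ b := by exact_mod_cast hb
        linarith
      push_cast
      nlinarith [ih]
  have hmono : ∀ a b : ℕ, a ≤ b → μ a ≤ μ b := by
    intro a b hab
    have h1 := key_lo a b hab
    have h2 : (0 : ℝ) ≤ (b : ℝ) - a := by
      have : (a : ℝ) ≤ b := by exact_mod_cast hab
      linarith
    nlinarith [hpos b]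
  have hsd : ∀ a b : ℕ, a ≤ b → s a + (b - a) ≤ s b := by
    intro a b hab
    induction b, hab using Nat.le_induction with
    | base => simp
    | succ b hb ih =>
      have : s b < s (b + 1) := hs (by omega)
      omega
  have hcard : (Finset.Icc (N - h + 1) N).card = h := by
    rw [Nat.card_Icc]; omega
  -- abbreviations
  have hDpos : (0 : ℝ) ≤ (s N : ℝ) - (s (N - 2 * h + 1) : ℝ) := by
    have := hs.monotone (show N - 2 * h + 1 ≤ N by omega)
    have : (s (N - 2 * h + 1) : ℝ) ≤ s N := by exact_mod_cast this
    linarith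
  have hGpos : (0 : ℝ) ≤ μ (s (N - 2 * h + 1) + 1) - μ (s (N - 2 * h + 1)) := hpos _
  -- per-term lower bound (optimism)
  have perlow : ∀ l ∈ Finset.Icc (N - h + 1) N,
      μ m ≤ μ (s l) + ((t : ℝ) - l) * (μ (s l) - μ (s (l - h))) / h := by
    intro l hl
    rw [Finset.mem_Icc] at hl
    have hlh : h ≤ l := by omega
    have h1 : s l ≤ s N := hs.monotone hl.2
    have h2 : s l ≤ m := le_trans h1 hms
    have h3 : μ m - μ (s l) ≤ ((m : ℝ) - s l) * (μ (s l + 1) - μ (s l)) := key_up _ _ h2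
    have h4 : (m : ℝ) - s l ≤ (t : ℝ) - l := by
      have c1 : (m : ℝ) ≤ t := by exact_mod_cast hmt
      have c2 : (l : ℝ) ≤ s l := by exact_mod_cast hsl l
      linarith
    have h5 : (0 : ℝ) ≤ (t : ℝ) - l := by
      have : (l : ℝ) ≤ t := by exact_mod_cast (show l ≤ t by omega)
      linarith
    have h6 : s (l - h) + h ≤ s l := by
      have := hsd (l - h) l (by omega)
      omega
    have h7 : (h : ℝ) * (μ (s l + 1) - μ (s l)) ≤ μ (s l) - μ (s (l - h)) := by
      have hle : s (l - h) ≤ s l := by omega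
      have hlo := key_lo (s (l - h)) (s l) hle
      have hc : (h : ℝ) ≤ (s l : ℝ) - (s (l - h) : ℝ) := by
        have : ((s (l - h) + h : ℕ) : ℝ) ≤ (s l : ℝ) := by exact_mod_cast h6
        push_cast at this
        linarith
      nlinarith [hpos (s l)]
    have h8 : μ m - μ (s l) ≤ ((t : ℝ) - l) * (μ (s l + 1) - μ (s l)) :=
      le_trans h3 (mul_le_mul_of_nonneg_right h4 (hpos _))
    have h9 : μ (s l + 1) - μ (s l) ≤ (μ (s l) - μ (s (l - h))) / h := by
      rw [le_div_iff₀ hh']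
      nlinarith [h7]
    have h10 : ((t : ℝ) - l) * (μ (s l + 1) - μ (s l))
        ≤ ((t : ℝ) - l) * ((μ (s l) - μ (s (l - h))) / h) :=
      mul_le_mul_of_nonneg_left h9 h5
    have heq : ((t : ℝ) - l) * (μ (s l) - μ (s (l - h))) / h
        = ((t : ℝ) - l) * ((μ (s l) - μ (s (l - h))) / h) := mul_div_assoc _ _ _
    linarith
  -- per-term upper bound
  have perhigh : ∀ l ∈ Finset.Icc (N - h + 1) N,
      μ (s l) + ((t : ℝ) - l) * (μ (s l) - μ (s (l - h))) / h
        ≤ μ m + ((t : ℝ) - l) * (((s N : ℝ) - (s (N - 2 * h + 1) : ℝ))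
            * (μ (s (N - 2 * h + 1) + 1) - μ (s (N - 2 * h + 1)))) / h := by
    intro l hl
    rw [Finset.mem_Icc] at hl
    have hA : N - 2 * h + 1 ≤ l - h := by omega
    have h1 : s (N - 2 * h + 1) ≤ s (l - h) := hs.monotone hA
    have h2 : s (l - h) ≤ s l := hs.monotone (by omega)
    have h3 : s l ≤ s N := hs.monotone hl.2
    have hμ : μ (s l) ≤ μ m := hmono _ _ (le_trans h3 hms)
    have hΔ : μ (s l) - μ (s (l - h)) ≤ ((s l : ℝ) - s (l - h))
        * (μ (s (l - h) + 1) - μ (s (l - h))) := key_up _ _ h2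
    have hfac1 : (s l : ℝ) - s (l - h) ≤ (s N : ℝ) - (s (N - 2 * h + 1) : ℝ) := by
      have c1 : (s l : ℝ) ≤ s N := by exact_mod_cast h3
      have c2 : (s (N - 2 * h + 1) : ℝ) ≤ s (l - h) := by exact_mod_cast h1
      linarith
    have hfac2 : μ (s (l - h) + 1) - μ (s (l - h))
        ≤ μ (s (N - 2 * h + 1) + 1) - μ (s (N - 2 * h + 1)) := hanti _ _ h1
    have hnn : (0 : ℝ) ≤ (s l : ℝ) - s (l - h) := by
      have : (s (l - h) : ℝ) ≤ s l := by exact_mod_cast h2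
      linarith
    have hΔ2 : μ (s l) - μ (s (l - h)) ≤ ((s N : ℝ) - (s (N - 2 * h + 1) : ℝ))
        * (μ (s (N - 2 * h + 1) + 1) - μ (s (N - 2 * h + 1))) := by
      have := mul_le_mul hfac1 hfac2 (hpos _) hDpos
      linarith
    have h5 : (0 : ℝ) ≤ (t : ℝ) - l := by
      have : (l : ℝ) ≤ t := by exact_mod_cast (show l ≤ t by omega)
      linarith
    have h6 : ((t : ℝ) - l) * (μ (s l) - μ (s (l - h))) / h
        ≤ ((t : ℝ) - l) * (((s N : ℝ) - (s (N - 2 * h + 1) : ℝ))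
            * (μ (s (N - 2 * h + 1) + 1) - μ (s (N - 2 * h + 1)))) / h := by
      gcongr
    linarith
  -- the Gauss-type sum
  have hgauss : ∑ l ∈ Finset.Icc (N - h + 1) N, ((t : ℝ) - l)
      = (h : ℝ) * (2 * (t : ℝ) - 2 * N + h - 1) / 2 := by
    have e1 : Finset.Icc (N - h + 1) N = Finset.Ico (N - h + 1) (N + 1) := by
      rw [Finset.Ico_add_one_right_eq_Icc]
    rw [e1, Finset.sum_Ico_eq_sum_range]
    have e2 : N + 1 - (N - h + 1) = h := by omega
    rw [e2]
    have e3 : ∀ i ∈ Finset.range h, (t : ℝ) - ((N - h + 1 + i : ℕ) : ℝ)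
        = ((t : ℝ) - (N : ℝ) + (h : ℝ) - 1) - (i : ℕ) := by
      intro i hi
      have : ((N - h + 1 + i : ℕ) : ℝ) = (N : ℝ) - h + 1 + i := by
        have : (h : ℝ) ≤ N := by exact_mod_cast (show h ≤ N by omega)
        push_cast [Nat.cast_sub (show h ≤ N by omega)]
        ring
      rw [this]; ring
    rw [Finset.sum_congr rfl e3, Finset.sum_sub_distrib, Finset.sum_const, Finset.card_range,
      nsmul_eq_mul]
    have e4 : ∑ i ∈ Finset.range h, ((i : ℕ) : ℝ) = (h : ℝ) * ((h : ℝ) - 1) / 2 := by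
      have := Finset.sum_range_id_mul_two h
      have e5 : ((∑ i ∈ Finset.range h, i) * 2 : ℕ) = ((h * (h - 1) : ℕ)) := this
      have e6 : ((∑ i ∈ Finset.range h, i : ℕ) : ℝ) * 2 = (h : ℝ) * ((h : ℝ) - 1) := by
        have hcast : ((h * (h - 1) : ℕ) : ℝ) = (h : ℝ) * ((h : ℝ) - 1) := by
          push_cast [Nat.cast_sub hh]
          ring
        calc ((∑ i ∈ Finset.range h, i : ℕ) : ℝ) * 2
            = ((((∑ i ∈ Finset.range h, i) * 2 : ℕ)) : ℝ) := by push_cast; ring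
          _ = ((h * (h - 1) : ℕ) : ℝ) := by rw [e5]
          _ = (h : ℝ) * ((h : ℝ) - 1) := hcast
        
      push_cast at e6
      linarith [e6]
    rw [e4]; ring
  constructor
  · -- optimism
    have hSlow : (h : ℝ) * μ m ≤ ∑ l ∈ Finset.Icc (N - h + 1) N,
        (μ (s l) + ((t : ℝ) - l) * (μ (s l) - μ (s (l - h))) / h) := by
      calc (h : ℝ) * μ m = ∑ _l ∈ Finset.Icc (N - h + 1) N, μ m := by
            rw [Finset.sum_const, hcard, nsmul_eq_mul]
        _ ≤ _ := Finset.sum_le_sum perlow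
    rw [one_div, inv_mul_eq_div, le_div_iff₀ hh']
    linarith
  · -- bias upper bound
    have hShigh : ∑ l ∈ Finset.Icc (N - h + 1) N,
        (μ (s l) + ((t : ℝ) - l) * (μ (s l) - μ (s (l - h))) / h)
        ≤ (h : ℝ) * μ m + ((h : ℝ) * (2 * (t : ℝ) - 2 * N + h - 1) / 2)
            * ((((s N : ℝ) - (s (N - 2 * h + 1) : ℝ))
              * (μ (s (N - 2 * h + 1) + 1) - μ (s (N - 2 * h + 1)))) / h) := by
      calc ∑ l ∈ Finset.Icc (N - h + 1) N,
            (μ (s l) + ((t : ℝ) - l) * (μ (s l) - μ (s (l - h))) / h)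
          ≤ ∑ l ∈ Finset.Icc (N - h + 1) N,
            (μ m + ((t : ℝ) - l) * (((s N : ℝ) - (s (N - 2 * h + 1) : ℝ))
              * (μ (s (N - 2 * h + 1) + 1) - μ (s (N - 2 * h + 1)))) / h) :=
          Finset.sum_le_sum perhigh
        _ = (h : ℝ) * μ m + (∑ l ∈ Finset.Icc (N - h + 1) N, ((t : ℝ) - l))
            * ((((s N : ℝ) - (s (N - 2 * h + 1) : ℝ))
              * (μ (s (N - 2 * h + 1) + 1) - μ (s (N - 2 * h + 1)))) / h) := by
            rw [Finset.sum_add_distrib, Finset.sum_const, hcard, nsmul_eq_mul]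
            congr 1
            rw [Finset.sum_mul]
            apply Finset.sum_congr rfl
            intro l _
            rw [mul_div_assoc]
        _ = _ := by rw [hgauss]
    have hmul := mul_le_mul_of_nonneg_left hShigh (le_of_lt (one_div_pos.mpr hh'))
    have alg : ∀ A C D G : ℝ, (1 / (h : ℝ)) * ((h : ℝ) * A + ((h : ℝ) * C / 2) * ((D * G) / (h : ℝ)))
        = A + (C * D / (2 * (h : ℝ))) * G := by
      intro A C D G
      field_simp
    have heq : (1 / (h : ℝ)) * ((h : ℝ) * μ m + ((h : ℝ) * (2 * (t : ℝ) - 2 * N + h - 1) / 2)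
            * ((((s N : ℝ) - (s (N - 2 * h + 1) : ℝ))
              * (μ (s (N - 2 * h + 1) + 1) - μ (s (N - 2 * h + 1)))) / h))
        = μ m + ((2 * (t : ℝ) - 2 * N + h - 1) * ((s N : ℝ) - (s (N - 2 * h + 1) : ℝ)) / (2 * h))
          * (μ (s (N - 2 * h + 1) + 1) - μ (s (N - 2 * h + 1))) :=
      alg _ _ _ _
    rw [heq] at hmul
    exact sub_le_iff_le_add'.mpr hmul
end

section
/- Fix k ≥ 1, T ≥ 1, σ > 0, ε ∈ (0, 1/2), and α > 2. For every action sequence I : {1,…,T} → {1,…,k}, ∑_{t=1}^{T} m_t ≤ k·(3 + 1/ε) + (3k/ε)·(2σT)^{2/3}·(10·α·log T)^{1/3}, where m_t := min{1, 2·β_{I_t}^{h_{I_t,t}}(t, t^{−α})} when h_{I_t,t} ≥ 1 and m_t := 1 when h_{I_t,t} = 0. -/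
lemma aux_sqrt_tele {a b : ℝ} (ha : 0 < a) (hab : a ≤ b) :
    (b - a) / (2 * (b * Real.sqrt b)) ≤ (Real.sqrt a)⁻¹ - (Real.sqrt b)⁻¹ := by
  have hb : 0 < b := lt_of_lt_of_le ha hab
  have hsa : 0 < Real.sqrt a := Real.sqrt_pos.mpr ha
  have hsb : 0 < Real.sqrt b := Real.sqrt_pos.mpr hb
  have hsab : Real.sqrt a ≤ Real.sqrt b := Real.sqrt_le_sqrt hab
  have ha2 : Real.sqrt a * Real.sqrt a = a := Real.mul_self_sqrt ha.le
  have hb2 : Real.sqrt b * Real.sqrt b = b := Real.mul_self_sqrt hb.le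
  rw [inv_sub_inv hsa.ne' hsb.ne', div_le_div_iff₀ (by positivity) (by positivity)]
  nlinarith [mul_pos hsa hsb, sq_nonneg (Real.sqrt b - Real.sqrt a), mul_nonneg hsa.le hsb.le]

lemma aux_sum_G (T : ℕ) (ε c B : ℝ) (hε0 : 0 < ε) (hε1 : ε < 1/2)
    (hc : 0 ≤ c) (hB : 0 ≤ B) (hcB : c = B * Real.sqrt B) :
    ∑ n ∈ Finset.range T, (if 1 ≤ ⌊ε * (n:ℝ)⌋₊ then
        min 1 (c / Real.sqrt ((⌊ε * (n:ℝ)⌋₊ : ℝ)^3)) else (1:ℝ))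
      ≤ (3 + 1/ε) + 3/ε * B := by
  set m : ℕ := ⌊(B+1)/ε + 1⌋₊ + 1 with hm
  have hx0 : (0:ℝ) ≤ (B+1)/ε + 1 := by positivity
  have hmgt : ((B+1)/ε + 1 : ℝ) < m := by
    simpa [hm] using Nat.lt_floor_add_one ((B+1)/ε + 1)
  have hmle : (m:ℝ) ≤ (B+1)/ε + 2 := by
    have := Nat.floor_le hx0
    push_cast [hm]
    linarith
  set F : ℕ → ℝ := fun n => 2*c/ε / Real.sqrt (ε*((n:ℝ)-1) - 1) with hF
  have hFnonneg : ∀ n, 0 ≤ F n := by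
    intro n; simp only [hF]; positivity
  have hkey : ∀ n ∈ Finset.Ico m T,
      (if 1 ≤ ⌊ε * (n:ℝ)⌋₊ then
        min 1 (c / Real.sqrt ((⌊ε * (n:ℝ)⌋₊ : ℝ)^3)) else (1:ℝ)) ≤ F n - F (n+1) := by
    intro n hn
    rw [Finset.mem_Ico] at hn
    have hnm : (m:ℝ) ≤ (n:ℝ) := by exact_mod_cast hn.1
    have hmn : (B+1)/ε + 1 < (n:ℝ) := lt_of_lt_of_le hmgt hnm
    have hdiv := (div_lt_iff₀ hε0).mp (by linarith : (B+1)/ε < (n:ℝ) - 1)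
    have ha : (0:ℝ) < ε*((n:ℝ)-1) - 1 := by nlinarith
    set a : ℝ := ε*((n:ℝ)-1) - 1 with hadef
    set b : ℝ := ε*(n:ℝ) - 1 with hbdef
    have hab : a ≤ b := by simp only [hadef, hbdef]; nlinarith
    have hBb : B < a := by simp only [hadef]; nlinarith
    have hb0 : (0:ℝ) < b := lt_of_lt_of_le ha hab
    have hεn1 : (1:ℝ) ≤ ε * (n:ℝ) := by simp only [hbdef] at hb0; linarith
    have hfl1 : 1 ≤ ⌊ε * (n:ℝ)⌋₊ := Nat.le_floor (by exact_mod_cast hεn1)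
    rw [if_pos hfl1]
    have hflb : b ≤ (⌊ε * (n:ℝ)⌋₊ : ℝ) := by
      have := Nat.sub_one_lt_floor (ε * (n:ℝ))
      simp only [hbdef]; linarith
    have hFn : F n = 2*c/ε / Real.sqrt a := by simp only [hF, hadef]
    have hFn1 : F (n+1) = 2*c/ε / Real.sqrt b := by
      simp only [hF, hbdef]; push_cast; ring_nf
    have hsb3 : Real.sqrt (b^3) = b * Real.sqrt b := by
      rw [show b^3 = b^2 * b by ring, Real.sqrt_mul (by positivity), Real.sqrt_sq hb0.le]
    have hstep1 : min 1 (c / Real.sqrt ((⌊ε * (n:ℝ)⌋₊ : ℝ)^3)) ≤ c / Real.sqrt (b^3) :=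
      le_trans (min_le_right _ _)
        (div_le_div_of_nonneg_left hc (Real.sqrt_pos.mpr (by positivity))
          (Real.sqrt_le_sqrt (pow_le_pow_left₀ hb0.le hflb 3)))
    refine le_trans hstep1 ?_
    have htele := aux_sqrt_tele ha hab
    have hba : b - a = ε := by simp only [hadef, hbdef]; ring
    rw [hba] at htele
    have hmul := mul_le_mul_of_nonneg_left htele (by positivity : (0:ℝ) ≤ 2*c/ε)
    have heq : 2*c/ε * (ε / (2 * (b * Real.sqrt b))) = c / Real.sqrt (b^3) := by
      rw [hsb3]; field_simp
    calc c / Real.sqrt (b^3) = 2*c/ε * (ε / (2 * (b * Real.sqrt b))) := heq.symm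
      _ ≤ 2*c/ε * ((Real.sqrt a)⁻¹ - (Real.sqrt b)⁻¹) := hmul
      _ = F n - F (n+1) := by rw [hFn, hFn1]; ring
  rw [← Finset.sum_filter_add_sum_filter_not (Finset.range T) (fun n => n < m)]
  have hpart1 : ∑ n ∈ (Finset.range T).filter (fun n => n < m),
      (if 1 ≤ ⌊ε * (n:ℝ)⌋₊ then
        min 1 (c / Real.sqrt ((⌊ε * (n:ℝ)⌋₊ : ℝ)^3)) else (1:ℝ)) ≤ (m:ℝ) := by
    have h1 : ∑ n ∈ (Finset.range T).filter (fun n => n < m),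
        (if 1 ≤ ⌊ε * (n:ℝ)⌋₊ then
          min 1 (c / Real.sqrt ((⌊ε * (n:ℝ)⌋₊ : ℝ)^3)) else (1:ℝ))
        ≤ ∑ _n ∈ (Finset.range T).filter (fun n => n < m), (1:ℝ) := by
      apply Finset.sum_le_sum
      intro n _
      split
      · exact min_le_left _ _
      · exact le_rfl
    rw [Finset.sum_const, nsmul_eq_mul, mul_one] at h1
    refine h1.trans ?_
    have hsub : (Finset.range T).filter (fun n => n < m) ⊆ Finset.range m := by
      intro x hx
      simp only [Finset.mem_filter, Finset.mem_range] at hx ⊢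
      exact hx.2
    have := Finset.card_le_card hsub
    rw [Finset.card_range] at this
    exact_mod_cast this
  have hIco : (Finset.range T).filter (fun n => ¬ n < m) = Finset.Ico m T := by
    ext n; simp [Finset.mem_Ico, not_lt, and_comm]
  have hpart2 : ∑ n ∈ (Finset.range T).filter (fun n => ¬ n < m),
      (if 1 ≤ ⌊ε * (n:ℝ)⌋₊ then
        min 1 (c / Real.sqrt ((⌊ε * (n:ℝ)⌋₊ : ℝ)^3)) else (1:ℝ)) ≤ 2/ε * B := by
    rw [hIco]
    rcases le_or_gt T m with h | h
    · rw [Finset.Ico_eq_empty (not_lt.mpr h), Finset.sum_empty]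
      positivity
    have hFm : F m ≤ 2/ε * B := by
      have ham : B < ε*((m:ℝ)-1) - 1 := by
        have := (div_lt_iff₀ hε0).mp (by linarith : (B+1)/ε < (m:ℝ) - 1)
        nlinarith
      have hsa : 0 < Real.sqrt (ε*((m:ℝ)-1) - 1) := Real.sqrt_pos.mpr (by linarith)
      have h1 : Real.sqrt B ≤ Real.sqrt (ε*((m:ℝ)-1) - 1) := Real.sqrt_le_sqrt ham.le
      have h2 : c / Real.sqrt (ε*((m:ℝ)-1) - 1) ≤ B := by
        rw [hcB, div_le_iff₀ hsa]
        nlinarith [Real.sqrt_nonneg B]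
      calc F m = 2/ε * (c / Real.sqrt (ε*((m:ℝ)-1) - 1)) := by simp only [hF]; ring
        _ ≤ 2/ε * B := mul_le_mul_of_nonneg_left h2 (by positivity)
    calc ∑ n ∈ Finset.Ico m T, (if 1 ≤ ⌊ε * (n:ℝ)⌋₊ then
          min 1 (c / Real.sqrt ((⌊ε * (n:ℝ)⌋₊ : ℝ)^3)) else (1:ℝ))
        ≤ ∑ n ∈ Finset.Ico m T, (F n - F (n+1)) := Finset.sum_le_sum hkey
      _ = F m - F (m + (T - m)) := by
          rw [Finset.sum_Ico_eq_sum_range]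
          exact Finset.sum_range_sub' (fun i => F (m + i)) (T - m)
      _ ≤ F m := by
          rw [Nat.add_sub_cancel' h.le]
          linarith [hFnonneg T]
      _ ≤ 2/ε * B := hFm
  refine le_trans (add_le_add hpart1 hpart2) ?_
  have hkey2 : (B+1)/ε + 2/ε*B = 1/ε + 3/ε*B := by field_simp; ring
  linarith


/-- Cumulative variance (exploration) bound of R-□-UCB: with pulls
`N_{i,t} = #{s ∈ {1,…,t} : I_s = i}`, window `h_{i,t} = ⌊ε N_{i,t−1}⌋`, and confidence
width `β_i^h(t, δ) = σ(t − N_{i,t−1} + h − 1)√(10 log(1/δ)/h³)` at `δ = t^{−α}` (so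
`log(1/δ) = log(t^α)`), the sum over `t = 1,…,T` of
`min{1, 2β_{I_t}^{h_{I_t,t}}(t, t^{−α})}` (taken to be `1` when `h_{I_t,t} = 0`) is at
most `k(3 + 1/ε) + (3k/ε)(2σT)^{2/3}(10 α log T)^{1/3}`. -/
theorem stmt_13 (k T : ℕ) (hk : 1 ≤ k) (hT : 1 ≤ T)
    (σ : ℝ) (hσ : 0 < σ) (ε : ℝ) (hε0 : 0 < ε) (hε1 : ε < 1 / 2)
    (α : ℝ) (hα : 2 < α)
    (I : ℕ → Fin k) :
    ∑ t ∈ Finset.Icc 1 T,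
        (if 1 ≤ ⌊ε * ((((Finset.Icc 1 (t - 1)).filter fun s => I s = I t).card : ℕ) : ℝ)⌋₊ then
          min 1
            (2 * (σ * ((t : ℝ) - ((((Finset.Icc 1 (t - 1)).filter fun s => I s = I t).card : ℕ) : ℝ)
                  + (⌊ε * ((((Finset.Icc 1 (t - 1)).filter fun s => I s = I t).card : ℕ) : ℝ)⌋₊ : ℝ)
                  - 1)
              * Real.sqrt (10 * Real.log ((t : ℝ) ^ α)
                  / (⌊ε * ((((Finset.Icc 1 (t - 1)).filter fun s => I s = I t).card : ℕ) : ℝ)⌋₊ : ℝ) ^ 3)))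
        else (1 : ℝ))
      ≤ (k : ℝ) * (3 + 1 / ε)
        + (3 * (k : ℝ) / ε) * (2 * σ * (T : ℝ)) ^ ((2 : ℝ) / 3)
            * (10 * α * Real.log (T : ℝ)) ^ ((1 : ℝ) / 3) := by
  have hT0 : (0:ℝ) < (T:ℝ) := by exact_mod_cast hT
  have hlogT : 0 ≤ Real.log (T:ℝ) := Real.log_nonneg (by exact_mod_cast hT)
  have hα0 : (0:ℝ) < α := by linarith
  set Z : ℝ := 10 * α * Real.log (T:ℝ) with hZ
  have hZ0 : 0 ≤ Z := by rw [hZ]; positivity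
  set c : ℝ := 2 * σ * (T:ℝ) * Real.sqrt Z with hc
  set B : ℝ := (2*σ*(T:ℝ))^((2:ℝ)/3) * Z^((1:ℝ)/3) with hB
  have hu : (0:ℝ) < 2*σ*(T:ℝ) := by positivity
  have hc0 : (0:ℝ) ≤ c := by rw [hc]; positivity
  have hB0 : (0:ℝ) ≤ B := by
    rw [hB]
    exact mul_nonneg (Real.rpow_nonneg hu.le _) (Real.rpow_nonneg hZ0 _)
  have hcB : c = B * Real.sqrt B := by
    have h1 : ((2*σ*(T:ℝ))^((2:ℝ)/3))^(3:ℕ) = (2*σ*(T:ℝ))^(2:ℕ) := by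
      rw [← Real.rpow_natCast ((2*σ*(T:ℝ))^((2:ℝ)/3)) 3, ← Real.rpow_mul hu.le]
      norm_num
    have h2 : (Z^((1:ℝ)/3))^(3:ℕ) = Z := by
      rw [← Real.rpow_natCast (Z^((1:ℝ)/3)) 3, ← Real.rpow_mul hZ0]
      norm_num
    have hsq : (2*σ*(T:ℝ)*Real.sqrt Z)^2 = (2*σ*(T:ℝ))^2 * Z := by
      rw [mul_pow, Real.sq_sqrt hZ0]
    have e1 : B^3 = c^2 := by
      rw [hB, hc, hsq, mul_pow, h1, h2]
    calc c = Real.sqrt (c^2) := (Real.sqrt_sq hc0).symm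
      _ = Real.sqrt (B^2 * B) := by rw [← e1]; ring_nf
      _ = B * Real.sqrt B := by rw [Real.sqrt_mul (by positivity) B, Real.sqrt_sq hB0]
  set G : ℕ → ℝ := fun n => if 1 ≤ ⌊ε * (n:ℝ)⌋₊ then
      min 1 (c / Real.sqrt ((⌊ε * (n:ℝ)⌋₊ : ℝ)^3)) else (1:ℝ) with hG
  have hG0 : ∀ n, 0 ≤ G n := by
    intro n
    simp only [hG]
    split
    · exact le_min zero_le_one (div_nonneg hc0 (Real.sqrt_nonneg _))
    · exact zero_le_one
  -- pointwise bound
  have hpoint : ∀ t ∈ Finset.Icc 1 T,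
      (if 1 ≤ ⌊ε * ((((Finset.Icc 1 (t - 1)).filter fun s => I s = I t).card : ℕ) : ℝ)⌋₊ then
          min 1
            (2 * (σ * ((t : ℝ) - ((((Finset.Icc 1 (t - 1)).filter fun s => I s = I t).card : ℕ) : ℝ)
                  + (⌊ε * ((((Finset.Icc 1 (t - 1)).filter fun s => I s = I t).card : ℕ) : ℝ)⌋₊ : ℝ)
                  - 1)
              * Real.sqrt (10 * Real.log ((t : ℝ) ^ α)
                  / (⌊ε * ((((Finset.Icc 1 (t - 1)).filter fun s => I s = I t).card : ℕ) : ℝ)⌋₊ : ℝ) ^ 3)))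
        else (1 : ℝ))
      ≤ G (((Finset.Icc 1 (t - 1)).filter fun s => I s = I t).card) := by
    intro t ht
    rw [Finset.mem_Icc] at ht
    set n : ℕ := ((Finset.Icc 1 (t - 1)).filter fun s => I s = I t).card with hn
    set h : ℕ := ⌊ε * (n:ℝ)⌋₊ with hh
    simp only [hG]
    by_cases hcond : 1 ≤ h
    · rw [if_pos hcond, if_pos hcond]
      apply min_le_min le_rfl
      have ht1 : (1:ℝ) ≤ (t:ℝ) := by exact_mod_cast ht.1
      have htT : (t:ℝ) ≤ (T:ℝ) := by exact_mod_cast ht.2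
      have hh1 : (1:ℝ) ≤ (h:ℝ) := by exact_mod_cast hcond
      have hnle : (n:ℝ) ≤ (t:ℝ) - 1 := by
        have h1 : n ≤ t - 1 := by
          rw [hn]
          calc ((Finset.Icc 1 (t - 1)).filter fun s => I s = I t).card
              ≤ (Finset.Icc 1 (t-1)).card := Finset.card_filter_le _ _
            _ = t - 1 := by rw [Nat.card_Icc]; omega
        have h2 : ((t - 1 : ℕ):ℝ) = (t:ℝ) - 1 := by
          have := ht.1; push_cast [Nat.cast_sub this]; ring
        calc (n:ℝ) ≤ ((t-1:ℕ):ℝ) := by exact_mod_cast h1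
          _ = (t:ℝ) - 1 := h2
      have hhn : (h:ℝ) ≤ (n:ℝ) := by
        calc (h:ℝ) ≤ ε * (n:ℝ) := Nat.floor_le (by positivity)
          _ ≤ 1 * (n:ℝ) := by nlinarith [Nat.cast_nonneg (α := ℝ) n]
          _ = (n:ℝ) := one_mul _
      have hcube : (0:ℝ) < ((h:ℝ))^3 := by positivity
      have hrhs : c / Real.sqrt (((h:ℕ):ℝ)^3) = 2*(σ*(T:ℝ)*Real.sqrt (Z/ ((h:ℕ):ℝ)^3)) := by
        rw [hc, Real.sqrt_div hZ0]
        ring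
      rw [hrhs, Real.log_rpow (by linarith : (0:ℝ) < (t:ℝ))]
      have hYZ : 10 * (α * Real.log (t:ℝ)) ≤ Z := by
        have hlog := Real.log_le_log (by linarith : (0:ℝ) < (t:ℝ)) htT
        rw [hZ]; nlinarith
      have hs : Real.sqrt (10 * (α * Real.log (t:ℝ)) / ((h:ℕ):ℝ)^3)
          ≤ Real.sqrt (Z / ((h:ℕ):ℝ)^3) :=
        Real.sqrt_le_sqrt ((div_le_div_iff_of_pos_right hcube).mpr hYZ)
      have hXT : (t:ℝ) - (n:ℝ) + (h:ℝ) - 1 ≤ (T:ℝ) := by linarith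
      have hfinal : ((t:ℝ) - (n:ℝ) + (h:ℝ) - 1) * Real.sqrt (10 * (α * Real.log (t:ℝ)) / ((h:ℕ):ℝ)^3)
          ≤ (T:ℝ) * Real.sqrt (Z / ((h:ℕ):ℝ)^3) :=
        mul_le_mul hXT hs (Real.sqrt_nonneg _) (by positivity)
      calc 2 * (σ * ((t:ℝ) - (n:ℝ) + (h:ℝ) - 1) * Real.sqrt (10 * (α * Real.log (t:ℝ)) / ((h:ℕ):ℝ)^3))
          = (2*σ) * (((t:ℝ) - (n:ℝ) + (h:ℝ) - 1) * Real.sqrt (10 * (α * Real.log (t:ℝ)) / ((h:ℕ):ℝ)^3)) := by ring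
        _ ≤ (2*σ) * ((T:ℝ) * Real.sqrt (Z / ((h:ℕ):ℝ)^3)) :=
            mul_le_mul_of_nonneg_left hfinal (by positivity)
        _ = 2*(σ*(T:ℝ)*Real.sqrt (Z/ ((h:ℕ):ℝ)^3)) := by ring
    · rw [if_neg hcond, if_neg hcond]
  -- per-arm bound
  have harm : ∀ i : Fin k,
      ∑ t ∈ (Finset.Icc 1 T).filter (fun t => I t = i),
        G (((Finset.Icc 1 (t - 1)).filter fun s => I s = I t).card)
      ≤ (3 + 1/ε) + 3/ε * B := by
    intro i
    have hcongr : ∀ t ∈ (Finset.Icc 1 T).filter (fun t => I t = i),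
        G (((Finset.Icc 1 (t - 1)).filter fun s => I s = I t).card)
        = G (((Finset.Icc 1 (t - 1)).filter fun s => I s = i).card) := by
      intro t ht
      rw [(Finset.mem_filter.mp ht).2]
    rw [Finset.sum_congr rfl hcongr]
    have hmono : ∀ s ∈ (Finset.Icc 1 T).filter (fun t => I t = i),
        ∀ t ∈ (Finset.Icc 1 T).filter (fun t => I t = i), s < t →
        ((Finset.Icc 1 (s - 1)).filter fun u => I u = i).card
          < ((Finset.Icc 1 (t - 1)).filter fun u => I u = i).card := by
      intro s hs t ht hst
      simp only [Finset.mem_filter, Finset.mem_Icc] at hs ht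
      have h1 : insert s ((Finset.Icc 1 (s - 1)).filter fun u => I u = i)
          ⊆ (Finset.Icc 1 (t - 1)).filter fun u => I u = i := by
        intro x hx
        rcases Finset.mem_insert.mp hx with rfl | hx
        · simp only [Finset.mem_filter, Finset.mem_Icc]
          exact ⟨⟨hs.1.1, by omega⟩, hs.2⟩
        · simp only [Finset.mem_filter, Finset.mem_Icc] at hx ⊢
          exact ⟨⟨hx.1.1, by omega⟩, hx.2⟩
      have h2 : s ∉ (Finset.Icc 1 (s - 1)).filter fun u => I u = i := by
        simp only [Finset.mem_filter, Finset.mem_Icc]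
        intro hcontra
        omega
      have h3 := Finset.card_le_card h1
      rw [Finset.card_insert_of_notMem h2] at h3
      omega
    have hinj : ∀ x ∈ (Finset.Icc 1 T).filter (fun t => I t = i),
        ∀ y ∈ (Finset.Icc 1 T).filter (fun t => I t = i),
        ((Finset.Icc 1 (x - 1)).filter fun u => I u = i).card
          = ((Finset.Icc 1 (y - 1)).filter fun u => I u = i).card → x = y := by
      intro x hx y hy hxy
      rcases lt_trichotomy x y with h | h | h
      · exact absurd hxy (Nat.ne_of_lt (hmono x hx y hy h))
      · exact h
      · exact absurd hxy.symm (Nat.ne_of_lt (hmono y hy x hx h))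
    rw [← Finset.sum_image (s := (Finset.Icc 1 T).filter (fun t => I t = i)) (f := G) (g := fun t => ((Finset.Icc 1 (t - 1)).filter fun u => I u = i).card) hinj]
    have hsubset : ((Finset.Icc 1 T).filter (fun t => I t = i)).image
        (fun t => ((Finset.Icc 1 (t - 1)).filter fun u => I u = i).card)
        ⊆ Finset.range T := by
      intro x hx
      rcases Finset.mem_image.mp hx with ⟨t, ht, rfl⟩
      simp only [Finset.mem_filter, Finset.mem_Icc] at ht
      rw [Finset.mem_range]
      calc ((Finset.Icc 1 (t - 1)).filter fun u => I u = i).card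
          ≤ (Finset.Icc 1 (t-1)).card := Finset.card_filter_le _ _
        _ = t - 1 := by rw [Nat.card_Icc]; omega
        _ < T := by omega
    calc ∑ x ∈ ((Finset.Icc 1 T).filter (fun t => I t = i)).image
          (fun t => ((Finset.Icc 1 (t - 1)).filter fun u => I u = i).card), G x
        ≤ ∑ x ∈ Finset.range T, G x :=
          Finset.sum_le_sum_of_subset_of_nonneg hsubset (fun x _ _ => hG0 x)
      _ ≤ (3 + 1/ε) + 3/ε * B := by
          simp only [hG]
          exact aux_sum_G T ε c B hε0 hε1 hc0 hB0 hcB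
  calc ∑ t ∈ Finset.Icc 1 T, _ ≤ ∑ t ∈ Finset.Icc 1 T,
        G (((Finset.Icc 1 (t - 1)).filter fun s => I s = I t).card) :=
        Finset.sum_le_sum hpoint
    _ = ∑ i : Fin k, ∑ t ∈ (Finset.Icc 1 T).filter (fun t => I t = i),
        G (((Finset.Icc 1 (t - 1)).filter fun s => I s = I t).card) :=
        (Finset.sum_fiberwise _ _ _).symm
    _ ≤ ∑ _i : Fin k, ((3 + 1/ε) + 3/ε * B) :=
        Finset.sum_le_sum (fun i _ => harm i)
    _ = (k:ℝ) * ((3 + 1/ε) + 3/ε * B) := by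
        rw [Finset.sum_const, Finset.card_univ, Fintype.card_fin, nsmul_eq_mul]
    _ = (k : ℝ) * (3 + 1 / ε)
        + (3 * (k : ℝ) / ε) * (2 * σ * (T : ℝ)) ^ ((2 : ℝ) / 3)
            * (10 * α * Real.log (T : ℝ)) ^ ((1 : ℝ) / 3) := by
        rw [hB, hZ]; ring
end

section
/- Let T = 2m with m ≥ 1. Consider the two 3-armed Rotting GTB instances ν and ν′ described in the context. For any two action sequences σ, σ′ : {1,…,T} → {1,2,3} that coincide on rounds 1,…,T/2, one has ((2/3)T − J(σ; ν)) + (T − J(σ′; ν′)) ≥ T/6; consequently max{(2/3)T − J(σ; ν), T − J(σ′; ν′)} ≥ T/12. (This is the core of the regret lower bound showing that Rotting GTBs with non-block-diagonal connectivity matrices are not learnable.) -/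
/-- Cumulative reward of action sequence `σ` over horizon `T` in the 3-armed Rotting GTB
whose connectivity graph has edges `{1,2}` and `{1,3}` (arm `0` here plays the role of
arm `1` of the paper): pulling arm `u` triggers arm `v` iff `u = v`, `u = 0`, or `v = 0`;
the trigger count of the pulled arm at round `t` counts the rounds `s ∈ {1,…,t}` whose
pull triggers it. -/
noncomputable def rotJ (T : ℕ) (μ : Fin 3 → ℕ → ℝ) (σ : ℕ → Fin 3) : ℝ :=
  ∑ t ∈ Finset.Icc 1 T,
    μ (σ t) (((Finset.Icc 1 t).filter fun s => σ s = σ t ∨ σ s = 0 ∨ σ t = 0).card)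

/-- Instance `ν` (horizon `T = 2m`): `μ₁(n) = 1` for `n ≤ T/2` and `0` afterwards;
`μ₂(n) = μ₃(n) = 2/3` for `n ≤ T/2` and `0` afterwards. -/
noncomputable def rotNu (m : ℕ) : Fin 3 → ℕ → ℝ := fun i n =>
  if i = 0 then (if n ≤ m then 1 else 0) else (if n ≤ m then 2 / 3 else 0)

/-- Instance `ν′`: `μ′₁(n) = 1` for all `n`; `μ′₂ = μ₂`, `μ′₃ = μ₃`. -/
noncomputable def rotNu' (m : ℕ) : Fin 3 → ℕ → ℝ := fun i n =>
  if i = 0 then 1 else (if n ≤ m then 2 / 3 else 0)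


section RotAux

/-- Trigger count of arm `i` up to round `t` (for nonzero arms). -/
def cntN (σ : ℕ → Fin 3) (i : Fin 3) (t : ℕ) : ℕ :=
  ((Finset.Icc 1 t).filter fun s => σ s = i ∨ σ s = 0).card

lemma cntN_lt (σ : ℕ → Fin 3) (i : Fin 3) {a b : ℕ} (hab : a < b) (hb1 : 1 ≤ b)
    (hσ : σ b = i) : cntN σ i a < cntN σ i b := by
  apply Finset.card_lt_card
  constructor
  · exact Finset.filter_subset_filter _ (Finset.Icc_subset_Icc_right hab.le)
  · intro hsub
    have hb : b ∈ (Finset.Icc 1 b).filter fun s => σ s = i ∨ σ s = 0 := by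
      simp [Finset.mem_filter, Finset.mem_Icc, hb1, hσ]
    have := hsub hb
    simp [Finset.mem_filter, Finset.mem_Icc] at this
    omega

lemma cntN_le (σ : ℕ → Fin 3) (i : Fin 3) (t : ℕ) : cntN σ i t ≤ t := by
  calc cntN σ i t ≤ (Finset.Icc 1 t).card := Finset.card_filter_le _ _
  _ = t := by rw [Nat.card_Icc]; omega

lemma cardA_le (σ : ℕ → Fin 3) (m : ℕ) (i : Fin 3) :
    ((Finset.Ioc m (2*m)).filter fun t => σ t = i ∧ cntN σ i t ≤ m).card
      ≤ m - cntN σ i m := by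
  have h : ∀ t ∈ (Finset.Ioc m (2*m)).filter fun t => σ t = i ∧ cntN σ i t ≤ m,
      cntN σ i t ∈ Finset.Icc (cntN σ i m + 1) m := by
    intro t ht
    simp only [Finset.mem_filter, Finset.mem_Ioc] at ht
    obtain ⟨⟨h1, h2⟩, h3, h4⟩ := ht
    have := cntN_lt σ i h1 (by omega) h3
    simp [Finset.mem_Icc]; omega
  calc ((Finset.Ioc m (2*m)).filter fun t => σ t = i ∧ cntN σ i t ≤ m).card
      ≤ (Finset.Icc (cntN σ i m + 1) m).card := by
        apply Finset.card_le_card_of_injOn (cntN σ i) h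
        intro a ha b hb hab
        simp only [Finset.coe_filter, Set.mem_setOf_eq, Finset.mem_Ioc] at ha hb
        by_contra hne
        rcases lt_trichotomy a b with h | h | h
        · exact absurd hab (cntN_lt σ i h (by omega) hb.2.1).ne
        · exact hne h
        · exact absurd hab.symm (cntN_lt σ i h (by omega) ha.2.1).ne
    _ = m - cntN σ i m := by rw [Nat.card_Icc]; omega

lemma cnt_sum (σ : ℕ → Fin 3) (m : ℕ) :
    cntN σ 1 m + cntN σ 2 m
      = m + ((Finset.Ioc 0 m).filter fun s => σ s = 0).card := by
  unfold cntN
  rw [← Finset.Icc_add_one_left_eq_Ioc]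
  rw [Finset.card_filter, Finset.card_filter, Finset.card_filter,
    ← Finset.sum_add_distrib]
  have : ∑ s ∈ Finset.Icc 1 m,
      (((if σ s = 1 ∨ σ s = 0 then 1 else 0) + if σ s = 2 ∨ σ s = 0 then 1 else 0) : ℕ)
      = ∑ s ∈ Finset.Icc 1 m, (1 + if σ s = 0 then 1 else 0) := by
    apply Finset.sum_congr rfl
    intro s _
    have h : ∀ x : Fin 3, ((if x = 1 ∨ x = 0 then 1 else 0) + (if x = 2 ∨ x = 0 then 1 else 0) : ℕ)
        = 1 + (if x = 0 then 1 else 0) := by decide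
    exact h (σ s)
  rw [this, Finset.sum_add_distrib, Finset.sum_const, Nat.card_Icc, smul_eq_mul]
  congr 1
  omega

lemma rcnt_of_zero (σ : ℕ → Fin 3) {t : ℕ} (h : σ t = 0) :
    ((Finset.Icc 1 t).filter fun s => σ s = σ t ∨ σ s = 0 ∨ σ t = 0).card = t := by
  rw [Finset.filter_true_of_mem (fun s _ => Or.inr (Or.inr h)), Nat.card_Icc]
  omega

lemma rcnt_of_ne (σ : ℕ → Fin 3) {t : ℕ} (h : σ t ≠ 0) :
    ((Finset.Icc 1 t).filter fun s => σ s = σ t ∨ σ s = 0 ∨ σ t = 0).card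
      = cntN σ (σ t) t := by
  unfold cntN
  congr 1
  apply Finset.filter_congr
  intro s _
  simp [h]

end RotAux


/-- Core of the regret lower bound for Rotting GTBs with
non-block-diagonal connectivity: for `T = 2m` and any two action sequences agreeing on
rounds `1,…,T/2`, the sum of the two regrets is at least `T/6`, hence their max is at
least `T/12`. -/
theorem stmt_14 (m : ℕ) (hm : 1 ≤ m) (σ σ' : ℕ → Fin 3)
    (hagree : ∀ s ∈ Finset.Icc 1 m, σ s = σ' s) :
    ((2 / 3) * ((2 * m : ℕ) : ℝ) - rotJ (2 * m) (rotNu m) σ)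
        + (((2 * m : ℕ) : ℝ) - rotJ (2 * m) (rotNu' m) σ') ≥ ((2 * m : ℕ) : ℝ) / 6 ∧
    max ((2 / 3) * ((2 * m : ℕ) : ℝ) - rotJ (2 * m) (rotNu m) σ)
        (((2 * m : ℕ) : ℝ) - rotJ (2 * m) (rotNu' m) σ') ≥ ((2 * m : ℕ) : ℝ) / 12 := by
  have hIcc : Finset.Icc 1 (2*m) = Finset.Ioc 0 (2*m) := by
    ext x; simp [Finset.mem_Icc, Finset.mem_Ioc]; omega
  set k := ((Finset.Ioc 0 m).filter fun s => σ s = 0).card with hkdef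
  have hk_le : k ≤ m := by
    calc k ≤ (Finset.Ioc 0 m).card := Finset.card_filter_le _ _
    _ = m := by rw [Nat.card_Ioc]; omega
  -- regret under ν'
  have h2 : (((2*m : ℕ):ℝ) - rotJ (2*m) (rotNu' m) σ') ≥ ((m:ℝ) - k)/3 := by
    have e1 : ((2*m : ℕ):ℝ) = ∑ _t ∈ Finset.Ioc 0 (2*m), (1:ℝ) := by
      rw [Finset.sum_const, Nat.card_Ioc]; simp
    rw [rotJ, hIcc, e1, ← Finset.sum_sub_distrib,
      ← Finset.sum_Ioc_consecutive _ (Nat.zero_le m) (by omega : m ≤ 2*m)]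
    have hA : (0:ℝ) ≤ ∑ t ∈ Finset.Ioc m (2*m), ((1:ℝ) -
        rotNu' m (σ' t) (((Finset.Icc 1 t).filter
          fun s => σ' s = σ' t ∨ σ' s = 0 ∨ σ' t = 0).card)) := by
      apply Finset.sum_nonneg
      intro t _
      have : ∀ n, rotNu' m (σ' t) n ≤ 1 := by
        intro n; unfold rotNu'; split_ifs <;> norm_num
      linarith [this (((Finset.Icc 1 t).filter
        fun s => σ' s = σ' t ∨ σ' s = 0 ∨ σ' t = 0).card)]
    have hB : ∑ t ∈ Finset.Ioc 0 m, ((1:ℝ) -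
        rotNu' m (σ' t) (((Finset.Icc 1 t).filter
          fun s => σ' s = σ' t ∨ σ' s = 0 ∨ σ' t = 0).card)) ≥ ((m:ℝ) - k)/3 := by
      have step : ∑ t ∈ Finset.Ioc 0 m, ((1:ℝ) -
          rotNu' m (σ' t) (((Finset.Icc 1 t).filter
            fun s => σ' s = σ' t ∨ σ' s = 0 ∨ σ' t = 0).card))
          ≥ ∑ t ∈ Finset.Ioc 0 m, (if ¬ σ' t = 0 then (1/3:ℝ) else 0) := by
        apply Finset.sum_le_sum
        intro t _
        by_cases h0 : σ' t = 0
        · simp [h0, rotNu']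
        · rw [if_pos h0]
          have : rotNu' m (σ' t) (((Finset.Icc 1 t).filter
              fun s => σ' s = σ' t ∨ σ' s = 0 ∨ σ' t = 0).card) ≤ 2/3 := by
            unfold rotNu'; rw [if_neg h0]; split_ifs <;> norm_num
          linarith
      have hcnt : ((Finset.Ioc 0 m).filter fun t => ¬ σ' t = 0).card = m - k := by
        have hfc : (Finset.Ioc 0 m).filter (fun t => σ' t = 0)
            = (Finset.Ioc 0 m).filter (fun t => σ t = 0) := by
          apply Finset.filter_congr
          intro t ht
          simp only [Finset.mem_Ioc] at ht
          rw [hagree t (by simp [Finset.mem_Icc]; omega)]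
        have := Finset.card_filter_add_card_filter_not
          (s := Finset.Ioc 0 m) (p := fun t => σ' t = 0)
        rw [hfc, Nat.card_Ioc, ← hkdef] at this
        omega
      have : ∑ t ∈ Finset.Ioc 0 m, (if ¬ σ' t = 0 then (1/3:ℝ) else 0)
          = ((m - k : ℕ):ℝ) * (1/3) := by
        rw [← Finset.sum_filter, Finset.sum_const, hcnt, nsmul_eq_mul]
      rw [this] at step
      calc ((m:ℝ) - k)/3 = ((m - k:ℕ):ℝ) * (1/3) := by
            rw [Nat.cast_sub hk_le]; ring
      _ ≤ _ := step
    linarith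
  -- regret under ν
  have h1 : ((2/3) * ((2*m : ℕ):ℝ) - rotJ (2*m) (rotNu m) σ) ≥ (k:ℝ)/3 := by
    have e1 : (2/3) * ((2*m : ℕ):ℝ) = ∑ _t ∈ Finset.Ioc 0 (2*m), (2/3:ℝ) := by
      rw [Finset.sum_const, Nat.card_Ioc, Nat.sub_zero, nsmul_eq_mul]; push_cast; ring
    rw [rotJ, hIcc, e1, ← Finset.sum_sub_distrib,
      ← Finset.sum_Ioc_consecutive _ (Nat.zero_le m) (by omega : m ≤ 2*m)]
    -- first half
    have hB : ∑ t ∈ Finset.Ioc 0 m, ((2/3:ℝ) -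
        rotNu m (σ t) (((Finset.Icc 1 t).filter
          fun s => σ s = σ t ∨ σ s = 0 ∨ σ t = 0).card)) ≥ (k:ℝ) * (-(1/3)) := by
      have step : ∑ t ∈ Finset.Ioc 0 m, ((2/3:ℝ) -
          rotNu m (σ t) (((Finset.Icc 1 t).filter
            fun s => σ s = σ t ∨ σ s = 0 ∨ σ t = 0).card))
          ≥ ∑ t ∈ Finset.Ioc 0 m, (if σ t = 0 then (-(1/3):ℝ) else 0) := by
        apply Finset.sum_le_sum
        intro t ht
        simp only [Finset.mem_Ioc] at ht
        by_cases h0 : σ t = 0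
        · rw [if_pos h0, rcnt_of_zero σ h0, h0]
          have : rotNu m 0 t = 1 := by
            unfold rotNu; rw [if_pos rfl, if_pos ht.2]
          rw [this]; norm_num
        · rw [if_neg h0]
          have : rotNu m (σ t) (((Finset.Icc 1 t).filter
              fun s => σ s = σ t ∨ σ s = 0 ∨ σ t = 0).card) ≤ 2/3 := by
            unfold rotNu; rw [if_neg h0]; split_ifs <;> norm_num
          linarith
      have : ∑ t ∈ Finset.Ioc 0 m, (if σ t = 0 then (-(1/3):ℝ) else 0)
          = (k:ℝ) * (-(1/3)) := by
        rw [← Finset.sum_filter, Finset.sum_const, ← hkdef, nsmul_eq_mul]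
      linarith [this ▸ step]
    -- second half
    have hA : ∑ t ∈ Finset.Ioc m (2*m), ((2/3:ℝ) -
        rotNu m (σ t) (((Finset.Icc 1 t).filter
          fun s => σ s = σ t ∨ σ s = 0 ∨ σ t = 0).card)) ≥ (k:ℝ) * (2/3) := by
      have hAcard : ((Finset.Ioc m (2*m)).filter
          fun t => ¬(σ t = 0) ∧ cntN σ (σ t) t ≤ m).card ≤ m - k := by
        have hsub : ((Finset.Ioc m (2*m)).filter
            fun t => ¬(σ t = 0) ∧ cntN σ (σ t) t ≤ m)
            ⊆ ((Finset.Ioc m (2*m)).filter fun t => σ t = 1 ∧ cntN σ 1 t ≤ m)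
              ∪ ((Finset.Ioc m (2*m)).filter fun t => σ t = 2 ∧ cntN σ 2 t ≤ m) := by
          intro t ht
          simp only [Finset.mem_filter, Finset.mem_union] at ht ⊢
          obtain ⟨htI, hne, hcnt⟩ := ht
          have h12 : σ t = 1 ∨ σ t = 2 := by
            have : ∀ x : Fin 3, ¬(x = 0) → x = 1 ∨ x = 2 := by decide
            exact this _ hne
          rcases h12 with h | h
          · exact Or.inl ⟨htI, h, by rwa [h] at hcnt⟩
          · exact Or.inr ⟨htI, h, by rwa [h] at hcnt⟩
        have hc1 := cardA_le σ m 1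
        have hc2 := cardA_le σ m 2
        have hs := cnt_sum σ m
        have hl1 := cntN_le σ 1 m
        have hl2 := cntN_le σ 2 m
        calc ((Finset.Ioc m (2*m)).filter
            fun t => ¬(σ t = 0) ∧ cntN σ (σ t) t ≤ m).card
            ≤ (((Finset.Ioc m (2*m)).filter fun t => σ t = 1 ∧ cntN σ 1 t ≤ m)
              ∪ ((Finset.Ioc m (2*m)).filter fun t => σ t = 2 ∧ cntN σ 2 t ≤ m)).card :=
              Finset.card_le_card hsub
          _ ≤ ((Finset.Ioc m (2*m)).filter fun t => σ t = 1 ∧ cntN σ 1 t ≤ m).card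
              + ((Finset.Ioc m (2*m)).filter fun t => σ t = 2 ∧ cntN σ 2 t ≤ m).card :=
              Finset.card_union_le _ _
          _ ≤ m - k := by rw [← hkdef] at hs; omega
      have step : ∑ t ∈ Finset.Ioc m (2*m), ((2/3:ℝ) -
          rotNu m (σ t) (((Finset.Icc 1 t).filter
            fun s => σ s = σ t ∨ σ s = 0 ∨ σ t = 0).card))
          ≥ ∑ t ∈ Finset.Ioc m (2*m),
            (if ¬(¬(σ t = 0) ∧ cntN σ (σ t) t ≤ m) then (2/3:ℝ) else 0) := by
        apply Finset.sum_le_sum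
        intro t ht
        simp only [Finset.mem_Ioc] at ht
        by_cases h0 : σ t = 0
        · rw [if_pos (by simp [h0]), rcnt_of_zero σ h0, h0]
          have : rotNu m 0 t = 0 := by
            unfold rotNu; rw [if_pos rfl, if_neg (by omega)]
          rw [this]; norm_num
        · rw [rcnt_of_ne σ h0]
          by_cases hc : cntN σ (σ t) t ≤ m
          · rw [if_neg (by tauto)]
            have : rotNu m (σ t) (cntN σ (σ t) t) = 2/3 := by
              unfold rotNu; rw [if_neg h0, if_pos hc]
            rw [this]; norm_num
          · rw [if_pos (by tauto)]
            have : rotNu m (σ t) (cntN σ (σ t) t) = 0 := by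
              unfold rotNu; rw [if_neg h0, if_neg hc]
            rw [this]; norm_num
      have hcard2 : ((Finset.Ioc m (2*m)).filter
          fun t => ¬(¬(σ t = 0) ∧ cntN σ (σ t) t ≤ m)).card ≥ k := by
        have := Finset.card_filter_add_card_filter_not
          (s := Finset.Ioc m (2*m)) (p := fun t => ¬(σ t = 0) ∧ cntN σ (σ t) t ≤ m)
        rw [Nat.card_Ioc] at this
        omega
      have : ∑ t ∈ Finset.Ioc m (2*m),
          (if ¬(¬(σ t = 0) ∧ cntN σ (σ t) t ≤ m) then (2/3:ℝ) else 0)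
          = (((Finset.Ioc m (2*m)).filter
            fun t => ¬(¬(σ t = 0) ∧ cntN σ (σ t) t ≤ m)).card : ℝ) * (2/3) := by
        rw [← Finset.sum_filter, Finset.sum_const, nsmul_eq_mul]
      rw [this] at step
      have : (k:ℝ) ≤ (((Finset.Ioc m (2*m)).filter
          fun t => ¬(¬(σ t = 0) ∧ cntN σ (σ t) t ≤ m)).card : ℝ) := by
        exact_mod_cast hcard2
      nlinarith
    linarith
  constructor
  · push_cast
    push_cast at h1 h2
    linarith
  · rcases le_total ((2 / 3) * ((2 * m : ℕ) : ℝ) - rotJ (2 * m) (rotNu m) σ)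
      (((2 * m : ℕ) : ℝ) - rotJ (2 * m) (rotNu' m) σ') with h | h
    · rw [max_eq_right h]
      push_cast at h h1 h2 ⊢
      linarith
    · rw [max_eq_left h]
      push_cast at h h1 h2 ⊢
      linarith
end

section
/- Let T = 2m with m ≥ 1. For the 3-armed Rotting GTB instance ν described in the context, every action sequence σ : {1,…,T} → {1,2,3} satisfies J(σ; ν) ≤ (2/3)T, and the value (2/3)T is attained (e.g., by pulling arm 2 in rounds 1,…,T/2 and arm 3 in rounds T/2+1,…,T). For the instance ν′, every action sequence σ satisfies J(σ; ν′) ≤ T, and the value T is attained by pulling arm 1 in every round. -/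
/-- trigger count of the pulled arm at round `t` -/
def rotC (σ : ℕ → Fin 3) (t : ℕ) : ℕ :=
  ((Finset.Icc 1 t).filter fun s => σ s = σ t ∨ σ s = 0 ∨ σ t = 0).card

lemma rot_key (m : ℕ) (σ : ℕ → Fin 3) (j : Fin 3) (hj : j ≠ 0) :
    ((Finset.Icc 1 (2*m)).filter fun t => σ t = 0 ∧ rotC σ t ≤ m).card
    + ((Finset.Icc 1 (2*m)).filter fun t => σ t = j ∧ rotC σ t ≤ m).card ≤ m := by
  set R0 := (Finset.Icc 1 (2*m)).filter fun t => σ t = 0 ∧ rotC σ t ≤ m with hR0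
  set Rj := (Finset.Icc 1 (2*m)).filter fun t => σ t = j ∧ rotC σ t ≤ m with hRj
  have hdisj : Disjoint R0 Rj := by
    rw [Finset.disjoint_left]
    intro a ha ha'
    simp only [hR0, hRj, Finset.mem_filter] at ha ha'
    exact hj (ha'.2.1.symm.trans ha.2.1)
  rw [← Finset.card_union_of_disjoint hdisj]
  set U := R0 ∪ Rj with hU
  rcases U.eq_empty_or_nonempty with h | h
  · simp [h]
  · set t := U.max' h with ht
    have htU : t ∈ U := U.max'_mem h
    have hsub : U ⊆ (Finset.Icc 1 t).filter fun s => σ s = σ t ∨ σ s = 0 ∨ σ t = 0 := by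
      intro s hs
      have hs1 : s ∈ Finset.Icc 1 (2*m) := by
        rcases Finset.mem_union.1 hs with h' | h'
        exacts [(Finset.mem_filter.1 h').1, (Finset.mem_filter.1 h').1]
      have hsle : s ≤ t := Finset.le_max' U s hs
      refine Finset.mem_filter.2 ⟨Finset.mem_Icc.2 ⟨(Finset.mem_Icc.1 hs1).1, hsle⟩, ?_⟩
      rcases Finset.mem_union.1 hs with h' | h'
      · exact Or.inr (Or.inl (Finset.mem_filter.1 h').2.1)
      · rcases Finset.mem_union.1 htU with h'' | h''
        · exact Or.inr (Or.inr (Finset.mem_filter.1 h'').2.1)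
        · exact Or.inl ((Finset.mem_filter.1 h').2.1.trans (Finset.mem_filter.1 h'').2.1.symm)
    have hcard : U.card ≤ rotC σ t := Finset.card_le_card hsub
    rcases Finset.mem_union.1 htU with h'' | h''
    · exact hcard.trans (Finset.mem_filter.1 h'').2.2
    · exact hcard.trans (Finset.mem_filter.1 h'').2.2

lemma rot_ub (m : ℕ) (σ : ℕ → Fin 3) :
    rotJ (2*m) (rotNu m) σ ≤ (2/3) * ((2*m : ℕ) : ℝ) := by
  have key1 := rot_key m σ 1 (by decide)
  have key2 := rot_key m σ 2 (by decide)
  have hb : rotJ (2*m) (rotNu m) σ ≤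
      (((Finset.Icc 1 (2*m)).filter fun t => σ t = 0 ∧ rotC σ t ≤ m).card : ℝ)
    + ((2:ℝ)/3) * ((Finset.Icc 1 (2*m)).filter fun t => σ t = 1 ∧ rotC σ t ≤ m).card
    + ((2:ℝ)/3) * ((Finset.Icc 1 (2*m)).filter fun t => σ t = 2 ∧ rotC σ t ≤ m).card := by
    unfold rotJ
    have hpt : ∀ t ∈ Finset.Icc 1 (2*m),
        rotNu m (σ t) (rotC σ t) ≤
          (if σ t = 0 ∧ rotC σ t ≤ m then (1:ℝ) else 0)
          + (2/3) * (if σ t = 1 ∧ rotC σ t ≤ m then (1:ℝ) else 0)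
          + (2/3) * (if σ t = 2 ∧ rotC σ t ≤ m then (1:ℝ) else 0) := by
      intro t _
      have h3 : σ t = 0 ∨ σ t = 1 ∨ σ t = 2 := by
        have h := fun i : Fin 3 => (by decide : ∀ i : Fin 3, i = 0 ∨ i = 1 ∨ i = 2) i
        exact h _
      rcases h3 with h | h | h <;> simp [rotNu, h] <;> try (split_ifs <;> norm_num)
    calc ∑ t ∈ Finset.Icc 1 (2*m), rotNu m (σ t) (rotC σ t)
        ≤ ∑ t ∈ Finset.Icc 1 (2*m),
          ((if σ t = 0 ∧ rotC σ t ≤ m then (1:ℝ) else 0)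
          + (2/3) * (if σ t = 1 ∧ rotC σ t ≤ m then (1:ℝ) else 0)
          + (2/3) * (if σ t = 2 ∧ rotC σ t ≤ m then (1:ℝ) else 0)) := Finset.sum_le_sum hpt
      _ = _ := by
          rw [Finset.sum_add_distrib, Finset.sum_add_distrib, ← Finset.mul_sum, ← Finset.mul_sum,
            Finset.sum_boole, Finset.sum_boole, Finset.sum_boole]
  have h0 : (0:ℝ) ≤ ((Finset.Icc 1 (2*m)).filter fun t => σ t = 0 ∧ rotC σ t ≤ m).card :=
    Nat.cast_nonneg _
  have k1 : ((((Finset.Icc 1 (2*m)).filter fun t => σ t = 0 ∧ rotC σ t ≤ m).card : ℝ)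
      + ((Finset.Icc 1 (2*m)).filter fun t => σ t = 1 ∧ rotC σ t ≤ m).card) ≤ m := by
    exact_mod_cast key1
  have k2 : ((((Finset.Icc 1 (2*m)).filter fun t => σ t = 0 ∧ rotC σ t ≤ m).card : ℝ)
      + ((Finset.Icc 1 (2*m)).filter fun t => σ t = 2 ∧ rotC σ t ≤ m).card) ≤ m := by
    exact_mod_cast key2
  have : ((2*m : ℕ) : ℝ) = 2 * (m : ℝ) := by push_cast; ring
  rw [this]
  linarith

/-- Optimal values of the two instances used in the rotting lower
bound: for `T = 2m`, every action sequence yields at most `(2/3)T` under `ν`, with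
equality attained by pulling arm `2` in rounds `1,…,T/2` and arm `3` afterwards; and
every action sequence yields at most `T` under `ν′`, with equality attained by always
pulling arm `1`. -/
theorem stmt_15 (m : ℕ) (hm : 1 ≤ m) :
    (∀ σ : ℕ → Fin 3, rotJ (2 * m) (rotNu m) σ ≤ (2 / 3) * ((2 * m : ℕ) : ℝ)) ∧
    rotJ (2 * m) (rotNu m) (fun s => if s ≤ m then (1 : Fin 3) else 2)
      = (2 / 3) * ((2 * m : ℕ) : ℝ) ∧
    (∀ σ : ℕ → Fin 3, rotJ (2 * m) (rotNu' m) σ ≤ ((2 * m : ℕ) : ℝ)) ∧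
    rotJ (2 * m) (rotNu' m) (fun _ => (0 : Fin 3)) = ((2 * m : ℕ) : ℝ) := by
  refine ⟨rot_ub m, ?_, ?_, ?_⟩
  · -- attainment for ν
    unfold rotJ
    have hterm : ∀ t ∈ Finset.Icc 1 (2*m),
        rotNu m ((fun s => if s ≤ m then (1 : Fin 3) else 2) t)
          (((Finset.Icc 1 t).filter fun s =>
            (fun s => if s ≤ m then (1 : Fin 3) else 2) s
              = (fun s => if s ≤ m then (1 : Fin 3) else 2) t
            ∨ (fun s => if s ≤ m then (1 : Fin 3) else 2) s = 0
            ∨ (fun s => if s ≤ m then (1 : Fin 3) else 2) t = 0).card) = 2/3 := by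
      intro t ht
      simp only [Finset.mem_Icc] at ht
      by_cases h : t ≤ m
      · have hfilter : ((Finset.Icc 1 t).filter fun s =>
            (if s ≤ m then (1 : Fin 3) else 2) = (if t ≤ m then (1 : Fin 3) else 2)
            ∨ (if s ≤ m then (1 : Fin 3) else 2) = 0
            ∨ (if t ≤ m then (1 : Fin 3) else 2) = 0) = Finset.Icc 1 t := by
          apply Finset.filter_true_of_mem
          intro s hs
          have : s ≤ m := le_trans (Finset.mem_Icc.1 hs).2 h
          simp [this, h]
        simp only [hfilter, Nat.card_Icc]
        have : t + 1 - 1 = t := by omega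
        rw [this]
        simp [rotNu, h]
      · have hfilter : ((Finset.Icc 1 t).filter fun s =>
            (if s ≤ m then (1 : Fin 3) else 2) = (if t ≤ m then (1 : Fin 3) else 2)
            ∨ (if s ≤ m then (1 : Fin 3) else 2) = 0
            ∨ (if t ≤ m then (1 : Fin 3) else 2) = 0) = Finset.Icc (m+1) t := by
          ext s
          simp only [Finset.mem_filter, Finset.mem_Icc, if_neg h]
          constructor
          · rintro ⟨⟨h1, h2⟩, hor⟩
            refine ⟨?_, h2⟩
            by_contra hsm
            push_neg at hsm
            have hsm' : s ≤ m := by omega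
            simp [hsm'] at hor
          · rintro ⟨h1, h2⟩
            have : ¬ s ≤ m := by omega
            exact ⟨⟨by omega, h2⟩, by simp [this]⟩
        simp only [hfilter, Nat.card_Icc]
        have h1 : t + 1 - (m + 1) = t - m := by omega
        rw [h1]
        have h2 : t - m ≤ m := by omega
        simp [rotNu, h, h2]
    rw [Finset.sum_congr rfl hterm, Finset.sum_const, Nat.card_Icc]
    have : 2 * m + 1 - 1 = 2 * m := by omega
    rw [this, nsmul_eq_mul]
    push_cast; ring
  · -- upper bound for ν'
    intro σ
    unfold rotJ
    have hpt : ∀ t ∈ Finset.Icc 1 (2*m),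
        rotNu' m (σ t)
          (((Finset.Icc 1 t).filter fun s => σ s = σ t ∨ σ s = 0 ∨ σ t = 0).card) ≤ 1 := by
      intro t _
      unfold rotNu'
      split_ifs <;> norm_num
    calc ∑ t ∈ Finset.Icc 1 (2*m),
          rotNu' m (σ t)
            (((Finset.Icc 1 t).filter fun s => σ s = σ t ∨ σ s = 0 ∨ σ t = 0).card)
        ≤ ∑ _t ∈ Finset.Icc 1 (2*m), (1:ℝ) := Finset.sum_le_sum hpt
      _ = ((2*m : ℕ) : ℝ) := by
          rw [Finset.sum_const, Nat.card_Icc]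
          have : 2 * m + 1 - 1 = 2 * m := by omega
          rw [this, nsmul_eq_mul, mul_one]
  · -- attainment for ν'
    unfold rotJ
    have hterm : ∀ t ∈ Finset.Icc 1 (2*m),
        rotNu' m ((fun _ => (0 : Fin 3)) t)
          (((Finset.Icc 1 t).filter fun s =>
            (fun _ => (0 : Fin 3)) s = (fun _ => (0 : Fin 3)) t
            ∨ (fun _ => (0 : Fin 3)) s = 0 ∨ (fun _ => (0 : Fin 3)) t = 0).card) = 1 := by
      intro t _
      simp [rotNu']
    rw [Finset.sum_congr rfl hterm, Finset.sum_const, Nat.card_Icc]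
    have : 2 * m + 1 - 1 = 2 * m := by omega
    rw [this, nsmul_eq_mul, mul_one]
end

section
/- Let k ≥ 1, and for each arm i ∈ {1,…,k} let N_i ≥ 1 be a natural number, μ_i ∈ ℝ a value, and μ̄_i, μ̂_i : {1,…,N_i} → ℝ two families indexed by window sizes; let c : {1,2,…} → ℝ. Assume: (i) μ_i ≤ μ̄_i(h) for every arm i and every h ∈ {1,…,N_i}; (ii) |μ̂_i(h) − μ̄_i(h)| ≤ c(h) for every arm i and every h ∈ {1,…,N_i}; (iii) the arm I maximizes over i ∈ {1,…,k} the index min_{1 ≤ h ≤ N_i} (μ̂_i(h) + c(h)). Then for every h ∈ {1,…,N_I}: μ̄_I(h) ≥ max_{i ∈ {1,…,k}} μ_i − 2·c(h). -/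
/-- Abstract overestimation lemma for RAW-UCB under the good event:
if every window estimate in expectation dominates the current mean (`μ i ≤ μ̄ i h`),
the empirical estimates concentrate (`|μ̂ i h − μ̄ i h| ≤ c h`), and `I` maximizes the
index `min_{1 ≤ h ≤ N i} (μ̂ i h + c h)`, then for every window `1 ≤ h ≤ N I` the
expected estimate of `I` overestimates the best current mean up to `2 c h`:
`μ̄ I h ≥ max_i μ_i − 2 c h`. -/
theorem stmt_16 (k : ℕ) (hk : 1 ≤ k)
    (N : Fin k → ℕ) (hN : ∀ i, 1 ≤ N i)
    (μ : Fin k → ℝ) (μbar μhat : Fin k → ℕ → ℝ) (c : ℕ → ℝ)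
    (h1 : ∀ (i : Fin k) (h : ℕ), 1 ≤ h → h ≤ N i → μ i ≤ μbar i h)
    (h2 : ∀ (i : Fin k) (h : ℕ), 1 ≤ h → h ≤ N i → |μhat i h - μbar i h| ≤ c h)
    (I : Fin k)
    (h3 : ∀ i : Fin k,
        (Finset.Icc 1 (N i)).inf' (Finset.nonempty_Icc.mpr (hN i))
            (fun h => μhat i h + c h)
          ≤ (Finset.Icc 1 (N I)).inf' (Finset.nonempty_Icc.mpr (hN I))
            (fun h => μhat I h + c h)) :
    ∀ h : ℕ, 1 ≤ h → h ≤ N I →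
      (Finset.univ.sup' ⟨⟨0, hk⟩, Finset.mem_univ _⟩ μ) - 2 * c h ≤ μbar I h := by
  intro h hh1 hh2
  -- best arm achieving the sup
  obtain ⟨i, -, hi⟩ := Finset.exists_mem_eq_sup' (⟨⟨0, hk⟩, Finset.mem_univ _⟩ :
    Finset.univ.Nonempty) μ
  rw [hi]
  -- μ i ≤ index of i
  have hμi : μ i ≤ (Finset.Icc 1 (N i)).inf' (Finset.nonempty_Icc.mpr (hN i))
      (fun h => μhat i h + c h) := by
    apply Finset.le_inf'
    intro h' hh'
    rw [Finset.mem_Icc] at hh'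
    have := abs_le.mp (h2 i h' hh'.1 hh'.2)
    linarith [h1 i h' hh'.1 hh'.2]
  have hI : (Finset.Icc 1 (N I)).inf' (Finset.nonempty_Icc.mpr (hN I))
      (fun h => μhat I h + c h) ≤ μhat I h + c h :=
    Finset.inf'_le _ (Finset.mem_Icc.mpr ⟨hh1, hh2⟩)
  have := abs_le.mp (h2 I h hh1 hh2)
  linarith [h3 i]
end

section
/- Let k ≥ 1 and T ≥ 1 be natural numbers, and for each i ∈ {1,…,k} let μ_i : {1,2,…} → ℝ be nondecreasing. Then for every choice of nonnegative integers N_1,…,N_k with ∑_{i=1}^k N_i = T, one has ∑_{i=1}^{k} ∑_{l=1}^{N_i} μ_i(l) ≤ max_{i ∈ {1,…,k}} ∑_{l=1}^{T} μ_i(l); that is, in a rested bandit with nondecreasing rewards, concentrating all T pulls on a single best arm maximizes the cumulative reward over all allocations. -/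
private lemma mono_le (g : ℕ → ℝ) (h : ∀ n, 1 ≤ n → g n ≤ g (n + 1)) :
    ∀ m n, 1 ≤ m → m ≤ n → g m ≤ g n := by
  intro m n hm hmn
  induction n, hmn using Nat.le_induction with
  | base => exact le_refl _
  | succ n hn ih => exact ih.trans (h n (hm.trans hn))

private lemma two_arm (g h : ℕ → ℝ)
    (hg : ∀ n, 1 ≤ n → g n ≤ g (n + 1)) (hh : ∀ n, 1 ≤ n → h n ≤ h (n + 1))
    (a b : ℕ) :
    (∑ l ∈ Finset.Icc 1 a, g l) + (∑ l ∈ Finset.Icc 1 b, h l)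
      ≤ max (∑ l ∈ Finset.Icc 1 (a + b), g l) (∑ l ∈ Finset.Icc 1 (a + b), h l) := by
  have hic : ∀ x : ℕ, Finset.Icc 1 x = Finset.Ioc 0 x := fun x => rfl
  simp only [hic]
  rcases Nat.eq_zero_or_pos a with rfl | ha
  · simpa using le_max_right _ _
  rcases Nat.eq_zero_or_pos b with rfl | hb
  · simpa using le_max_left _ _
  by_contra hcon
  push_neg at hcon
  set Sga := ∑ l ∈ Finset.Ioc 0 a, g l with hSga
  set Shb := ∑ l ∈ Finset.Ioc 0 b, h l with hShb
  have hsplit1 : (∑ l ∈ Finset.Ioc 0 (a + b), g l)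
      = Sga + ∑ l ∈ Finset.Ioc a (a + b), g l :=
    (Finset.sum_Ioc_consecutive _ (Nat.zero_le a) (Nat.le_add_right a b)).symm
  have hsplit2 : (∑ l ∈ Finset.Ioc 0 (a + b), h l)
      = Shb + ∑ l ∈ Finset.Ioc b (a + b), h l := by
    rw [← (Finset.sum_Ioc_consecutive _ (Nat.zero_le b) (Nat.le_add_left b a))]
  have hT1 : (∑ l ∈ Finset.Ioc a (a + b), g l) < Shb := by
    have h1 := (max_lt_iff.mp hcon).1
    rw [hsplit1] at h1; linarith
  have hT2 : (∑ l ∈ Finset.Ioc b (a + b), h l) < Sga := by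
    have h2 := (max_lt_iff.mp hcon).2
    rw [hsplit2] at h2; linarith
  -- bounds
  have h1 : Sga ≤ (a : ℝ) * g (a + 1) := by
    have := Finset.sum_le_card_nsmul (Finset.Ioc 0 a) g (g (a + 1))
      (fun l hl => by
        have hl' := Finset.mem_Ioc.mp hl
        exact mono_le g hg l (a + 1) hl'.1 (hl'.2.trans (Nat.le_succ a)))
    simpa [Nat.card_Ioc, nsmul_eq_mul] using this
  have h2 : (b : ℝ) * g (a + 1) ≤ ∑ l ∈ Finset.Ioc a (a + b), g l := by
    have := Finset.card_nsmul_le_sum (Finset.Ioc a (a + b)) g (g (a + 1))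
      (fun l hl => by
        have hl' := Finset.mem_Ioc.mp hl
        exact mono_le g hg (a + 1) l (Nat.le_add_left 1 a) hl'.1)
    simpa [Nat.card_Ioc, nsmul_eq_mul] using this
  have h3 : Shb ≤ (b : ℝ) * h (b + 1) := by
    have := Finset.sum_le_card_nsmul (Finset.Ioc 0 b) h (h (b + 1))
      (fun l hl => by
        have hl' := Finset.mem_Ioc.mp hl
        exact mono_le h hh l (b + 1) hl'.1 (hl'.2.trans (Nat.le_succ b)))
    simpa [Nat.card_Ioc, nsmul_eq_mul] using this
  have h4 : (a : ℝ) * h (b + 1) ≤ ∑ l ∈ Finset.Ioc b (a + b), h l := by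
    have := Finset.card_nsmul_le_sum (Finset.Ioc b (a + b)) h (h (b + 1))
      (fun l hl => by
        have hl' := Finset.mem_Ioc.mp hl
        exact mono_le h hh (b + 1) l (Nat.le_add_left 1 b) hl'.1)
    simpa [Nat.card_Ioc, nsmul_eq_mul] using this
  have ha' : (0 : ℝ) < a := by exact_mod_cast ha
  have hb' : (0 : ℝ) < b := by exact_mod_cast hb
  -- b * Sga ≤ a*b*g(a+1) ≤ a * T1 < a * Shb, and a * Shb ≤ ... < b * Sga
  have c1 : (b : ℝ) * Sga < (a : ℝ) * Shb := by
    calc (b : ℝ) * Sga ≤ (b : ℝ) * ((a : ℝ) * g (a + 1)) := by nlinarith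
    _ = (a : ℝ) * ((b : ℝ) * g (a + 1)) := by ring
    _ ≤ (a : ℝ) * (∑ l ∈ Finset.Ioc a (a + b), g l) := by nlinarith
    _ < (a : ℝ) * Shb := by nlinarith
  have c2 : (a : ℝ) * Shb < (b : ℝ) * Sga := by
    calc (a : ℝ) * Shb ≤ (a : ℝ) * ((b : ℝ) * h (b + 1)) := by nlinarith
    _ = (b : ℝ) * ((a : ℝ) * h (b + 1)) := by ring
    _ ≤ (b : ℝ) * (∑ l ∈ Finset.Ioc b (a + b), h l) := by nlinarith
    _ < (b : ℝ) * Sga := by nlinarith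
  linarith

private lemma key {k : ℕ} (μ : Fin k → ℕ → ℝ)
    (hmono : ∀ (i : Fin k) (n : ℕ), 1 ≤ n → μ i n ≤ μ i (n + 1))
    (N : Fin k → ℕ) (s : Finset (Fin k)) (hs : s.Nonempty) :
    ∑ i ∈ s, ∑ l ∈ Finset.Icc 1 (N i), μ i l
      ≤ s.sup' hs (fun i => ∑ l ∈ Finset.Icc 1 (∑ j ∈ s, N j), μ i l) := by
  induction hs using Finset.Nonempty.cons_induction with
  | singleton a => simp
  | cons a t hat ht ih =>
    rw [Finset.sum_cons]
    set m := ∑ j ∈ t, N j with hm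
    obtain ⟨i₀, hi₀mem, hi₀⟩ := Finset.exists_mem_eq_sup' ht
      (fun i => ∑ l ∈ Finset.Icc 1 m, μ i l)
    have step1 : ∑ i ∈ t, ∑ l ∈ Finset.Icc 1 (N i), μ i l
        ≤ ∑ l ∈ Finset.Icc 1 m, μ i₀ l := by
      have := ih
      rw [hi₀] at this
      exact this
    have step2 : (∑ l ∈ Finset.Icc 1 (N a), μ a l) + (∑ l ∈ Finset.Icc 1 m, μ i₀ l)
        ≤ max (∑ l ∈ Finset.Icc 1 (N a + m), μ a l)
            (∑ l ∈ Finset.Icc 1 (N a + m), μ i₀ l) :=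
      two_arm (μ a) (μ i₀) (hmono a) (hmono i₀) (N a) m
    have hsum : ∑ j ∈ Finset.cons a t hat, N j = N a + m := by
      rw [Finset.sum_cons]
    rw [hsum]
    refine le_trans (by linarith) (step2.trans (max_le ?_ ?_))
    · exact Finset.le_sup' (fun i => ∑ l ∈ Finset.Icc 1 (N a + m), μ i l)
        (Finset.mem_cons_self a t)
    · exact Finset.le_sup' (fun i => ∑ l ∈ Finset.Icc 1 (N a + m), μ i l)
        (Finset.mem_cons.mpr (Or.inr hi₀mem))

/-- In a rested bandit with nondecreasing rewards, concentrating all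
`T` pulls on a single best arm maximizes cumulative reward over all allocations: for any
nonnegative integers `N₁,…,N_k` with `∑ N_i = T`,
`∑_i ∑_{l=1}^{N_i} μ_i(l) ≤ max_i ∑_{l=1}^{T} μ_i(l)`. -/
theorem stmt_17 (k T : ℕ) (hk : 1 ≤ k) (hT : 1 ≤ T)
    (μ : Fin k → ℕ → ℝ)
    (hmono : ∀ (i : Fin k) (n : ℕ), 1 ≤ n → μ i n ≤ μ i (n + 1))
    (N : Fin k → ℕ) (hN : ∑ i, N i = T) :
    ∑ i, ∑ l ∈ Finset.Icc 1 (N i), μ i l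
      ≤ Finset.univ.sup' ⟨⟨0, hk⟩, Finset.mem_univ _⟩
          (fun i => ∑ l ∈ Finset.Icc 1 T, μ i l) := by
  have := key μ hmono N Finset.univ ⟨⟨0, hk⟩, Finset.mem_univ _⟩
  rwa [hN] at this
end
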